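/- arXiv:2212.11176 — 4 statements merged into one kernel-verified Lean document; each statement's English description precedes it below -/
import Mathlib

section
/- For every X ⊆ ℕ, every k ≥ 1, and every h ∈ ℕ, the upper Buck density satisfies 𝔟*(k·X + h) = (1/k)·𝔟*(X). -/
open Filter Set

/-- Upper asymptotic density. -/
noncomputable def upperDensity (X : Set ℕ) : ℝ :=
  Filter.limsup (fun n : ℕ => ((X ∩ Set.Icc 1 n).ncard : ℝ) / n) Filter.atTop

/-- `A` is a finite union of arithmetic progressions `k·ℕ + h` with `k ≥ 1`. -/
def IsAPUnion (A : Set ℕ) : Prop :=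
  ∃ S : Finset (ℕ × ℕ), (∀ p ∈ S, 1 ≤ p.1) ∧
    A = ⋃ p ∈ S, {n : ℕ | ∃ m : ℕ, n = p.1 * m + p.2}

/-- Upper Buck density. -/
noncomputable def buckUpper (X : Set ℕ) : ℝ :=
  sInf {d : ℝ | ∃ A : Set ℕ, IsAPUnion A ∧ X ⊆ A ∧ d = upperDensity A}

/-- Lower Buck density. -/
noncomputable def buckLower (X : Set ℕ) : ℝ := 1 - buckUpper Xᶜ

/-- Sumset of two subsets of ℕ. -/
def sumset (X Y : Set ℕ) : Set ℕ := {n : ℕ | ∃ x ∈ X, ∃ y ∈ Y, n = x + y}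

/-- An arithmetic upper quasi-density on ℕ. -/
structure ArithUpperQuasiDensity where
  toFun : Set ℕ → ℝ
  le_one : ∀ X : Set ℕ, toFun X ≤ 1
  univ_eq : toFun Set.univ = 1
  subadd : ∀ X Y : Set ℕ, toFun (X ∪ Y) ≤ toFun X + toFun Y
  scale : ∀ (X : Set ℕ) (k h : ℕ), 1 ≤ k →
    toFun ((fun x => k * x + h) '' X) = toFun X / k

/-- Conjugate (lower) quasi-density. -/
noncomputable def ArithUpperQuasiDensity.conj (μ : ArithUpperQuasiDensity)
    (X : Set ℕ) : ℝ := 1 - μ.toFun Xᶜ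

/- ### sequence bounds -/

lemma seq_le_one (c : ℕ → ℕ) (hc : ∀ n, c n ≤ n) (n : ℕ) : (c n : ℝ) / n ≤ 1 := by
  rcases Nat.eq_zero_or_pos n with rfl | hn
  · simp
  · rw [div_le_one (by exact_mod_cast hn)]
    exact_mod_cast hc n

lemma seq_bdd (c : ℕ → ℕ) (hc : ∀ n, c n ≤ n) :
    IsBoundedUnder (· ≤ ·) atTop (fun n : ℕ => (c n : ℝ) / n) :=
  Filter.isBoundedUnder_of ⟨1, fun n => seq_le_one c hc n⟩

lemma seq_cobdd (c : ℕ → ℕ) :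
    IsCoboundedUnder (· ≤ ·) atTop (fun n : ℕ => (c n : ℝ) / n) :=
  Filter.IsBoundedUnder.isCoboundedUnder_le
    (Filter.isBoundedUnder_of ⟨0, fun n => by positivity⟩)

lemma ncard_inter_Icc_le (A : Set ℕ) (n : ℕ) : (A ∩ Set.Icc 1 n).ncard ≤ n := by
  calc (A ∩ Set.Icc 1 n).ncard ≤ (Set.Icc 1 n).ncard :=
        Set.ncard_le_ncard inter_subset_right (Set.finite_Icc 1 n)
    _ = n := by
        rw [← Finset.coe_Icc, Set.ncard_coe_finset, Nat.card_Icc]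
        omega

lemma upperDensity_nonneg (A : Set ℕ) : 0 ≤ upperDensity A := by
  apply Filter.le_limsup_of_frequently_le
  · exact (Filter.Eventually.of_forall (fun n => by positivity)).frequently
  · exact seq_bdd _ (ncard_inter_Icc_le A)

lemma upperDensity_mono {A B : Set ℕ} (hAB : A ⊆ B) : upperDensity A ≤ upperDensity B := by
  apply Filter.limsup_le_limsup
  · apply Filter.Eventually.of_forall
    intro n
    rcases Nat.eq_zero_or_pos n with rfl | hn
    · simp
    · have h1 : (A ∩ Set.Icc 1 n).ncard ≤ (B ∩ Set.Icc 1 n).ncard :=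
        Set.ncard_le_ncard (Set.inter_subset_inter_left _ hAB) ((Set.finite_Icc 1 n).inter_of_right B)
      have hn0 : (0:ℝ) < n := by exact_mod_cast hn
      exact (div_le_div_iff_of_pos_right hn0).mpr (by exact_mod_cast h1)
  · exact seq_cobdd _
  · exact seq_bdd _ (ncard_inter_Icc_le B)

/- ### the limsup scaling lemma -/

lemma limsup_scale (c c' : ℕ → ℕ) (k h : ℕ) (hk : 1 ≤ k)
    (hub : ∀ n, c' n ≤ c ((n - h) / k) + 1)
    (hlb : ∀ m, c m ≤ c' (k * m + h))
    (hcn : ∀ n, c n ≤ n) (hcn' : ∀ n, c' n ≤ n) :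
    Filter.limsup (fun n : ℕ => (c' n : ℝ) / n) Filter.atTop
      = Filter.limsup (fun n : ℕ => (c n : ℝ) / n) Filter.atTop / k := by
  have hk0 : (0:ℝ) < k := by exact_mod_cast hk
  have hk1 : (1:ℝ) ≤ k := by exact_mod_cast hk
  have hbu : IsBoundedUnder (· ≤ ·) atTop (fun n : ℕ => (c n : ℝ) / n) := seq_bdd c hcn
  have hbv : IsBoundedUnder (· ≤ ·) atTop (fun n : ℕ => (c' n : ℝ) / n) := seq_bdd c' hcn'
  have hcbu : IsCoboundedUnder (· ≤ ·) atTop (fun n : ℕ => (c n : ℝ) / n) := seq_cobdd c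
  have hcbv : IsCoboundedUnder (· ≤ ·) atTop (fun n : ℕ => (c' n : ℝ) / n) := seq_cobdd c'
  set L := Filter.limsup (fun n : ℕ => (c n : ℝ) / n) Filter.atTop with hLdef
  have hL0 : 0 ≤ L := by
    apply Filter.le_limsup_of_frequently_le
    · exact (Filter.Eventually.of_forall (fun n => by positivity)).frequently
    · exact hbu
  apply le_antisymm
  · -- limsup v ≤ L / k
    apply le_of_forall_pos_le_add
    intro ε hε
    have hev1 : ∀ᶠ m in atTop, (c m : ℝ) / m < L + ε * k / 2 :=
      Filter.eventually_lt_of_limsup_lt (by nlinarith) hbu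
    obtain ⟨N1, hN1⟩ := Filter.eventually_atTop.mp hev1
    obtain ⟨N2, hN2⟩ := exists_nat_ge (2 / ε)
    set M := max N1 1 with hM
    set N := max (k * M + h) (N2 + 1) with hN
    apply Filter.limsup_le_of_le hcbv
    filter_upwards [Filter.eventually_ge_atTop N] with n hn
    have hnk : k * M + h ≤ n := le_trans (le_max_left _ _) hn
    have hn2 : N2 + 1 ≤ n := le_trans (le_max_right _ _) hn
    have hn1 : 1 ≤ n := by omega
    set m := (n - h) / k with hm
    have hMm : M ≤ m := by
      have h1 : k * M ≤ n - h := Nat.le_sub_of_add_le hnk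
      exact (Nat.le_div_iff_mul_le hk).mpr (by rwa [Nat.mul_comm])
    have hm1 : 1 ≤ m := le_trans (le_max_right N1 1) hMm
    have hmN1 : N1 ≤ m := le_trans (le_max_left N1 1) hMm
    have hm0 : (0:ℝ) < m := by exact_mod_cast hm1
    have hn0 : (0:ℝ) < n := by exact_mod_cast hn1
    have hum := hN1 m hmN1
    have hcm : (c m : ℝ) ≤ (L + ε * k / 2) * m := ((div_lt_iff₀ hm0).mp hum).le
    have hKM : (k:ℝ) * m ≤ n := by
      have h2 : m * k ≤ n := le_trans (Nat.div_mul_le_self (n - h) k) (Nat.sub_le n h)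
      calc (k:ℝ) * m = ((m * k : ℕ) : ℝ) := by push_cast; ring
        _ ≤ n := Nat.cast_le.mpr h2
    have hεn : 1 ≤ ε / 2 * (n:ℝ) := by
      have h3 : (N2 : ℝ) ≤ n := by exact_mod_cast le_trans (Nat.le_succ N2) hn2
      have h4 : 2 / ε ≤ (n:ℝ) := le_trans hN2 h3
      rw [div_le_iff₀ hε] at h4
      nlinarith
    have f0 : (c' n : ℝ) ≤ (c m : ℝ) + 1 := by exact_mod_cast hub n
    have key : (c' n : ℝ) * k ≤ (L + ε * k) * n := by
      nlinarith [mul_le_mul_of_nonneg_right f0 hk0.le,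
        mul_le_mul_of_nonneg_right hcm hk0.le,
        mul_le_mul_of_nonneg_left hKM (show (0:ℝ) ≤ L + ε * k / 2 by positivity),
        mul_le_mul_of_nonneg_left hεn hk0.le]
    show (c' n : ℝ) / n ≤ L / k + ε
    have hLk : L / (k:ℝ) + ε = (L + ε * k) / k := by field_simp
    rw [hLk, div_le_div_iff₀ hn0 hk0]
    exact key
  · -- L / k ≤ limsup v
    have hv0 : 0 ≤ Filter.limsup (fun n : ℕ => (c' n : ℝ) / n) Filter.atTop := by
      apply Filter.le_limsup_of_frequently_le
      · exact (Filter.Eventually.of_forall (fun n => by positivity)).frequently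
      · exact hbv
    rcases le_or_gt L 0 with hL | hL
    · exact le_trans (by rw [div_nonpos_iff]; exact Or.inr ⟨hL, hk0.le⟩) hv0
    · apply le_of_forall_pos_le_add
      intro ε hε
      have hfreq : ∃ᶠ m in atTop, L - ε * k / 2 < (c m : ℝ) / m :=
        Filter.frequently_lt_of_lt_limsup hcbu (by nlinarith)
      obtain ⟨N₀, hN₀⟩ := exists_nat_ge (L * h * 2 / (ε * k * k))
      have key : ∃ᶠ n in atTop, (L - ε * k) / k ≤ (c' n : ℝ) / n := by
        rw [Filter.frequently_atTop] at hfreq ⊢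
        intro N
        obtain ⟨m, hm, hum⟩ := hfreq (max (max N N₀) 1)
        have hm1 : 1 ≤ m := le_trans (le_max_right _ _) hm
        have hmN : N ≤ m := le_trans (le_trans (le_max_left _ _) (le_max_left _ _)) hm
        have hmN0 : N₀ ≤ m := le_trans (le_trans (le_max_right _ _) (le_max_left _ _)) hm
        refine ⟨k * m + h, ?_, ?_⟩
        · calc N ≤ m := hmN
            _ ≤ k * m := Nat.le_mul_of_pos_left m hk
            _ ≤ k * m + h := Nat.le_add_right _ _
        · have hm0 : (0:ℝ) < m := by exact_mod_cast hm1
          have hnn1 : 1 ≤ k * m + h := le_trans (le_trans hm1 (Nat.le_mul_of_pos_left m hk)) (Nat.le_add_right _ _)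
          have hnr : (0:ℝ) < ((k * m + h : ℕ) : ℝ) := by exact_mod_cast hnn1
          have hcm : (L - ε * k / 2) * m ≤ (c m : ℝ) := ((lt_div_iff₀ hm0).mp hum).le
          have hcc : (c m : ℝ) ≤ (c' (k * m + h) : ℝ) := by exact_mod_cast hlb m
          have hN0r : L * h * 2 / (ε * k * k) ≤ (m : ℝ) :=
            le_trans hN₀ (by exact_mod_cast hmN0)
          have h2Lh : L * h * 2 ≤ ε * k * k * m := by
            rw [div_le_iff₀ (by positivity)] at hN0r
            nlinarith
          rw [div_le_div_iff₀ hk0 hnr]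
          push_cast
          nlinarith [mul_le_mul_of_nonneg_right hcm hk0.le,
            mul_le_mul_of_nonneg_right hcc hk0.le,
            mul_nonneg (mul_nonneg hε.le hk0.le) (Nat.cast_nonneg h)]
      have hge : (L - ε * k) / k ≤ Filter.limsup (fun n : ℕ => (c' n : ℝ) / n) Filter.atTop :=
        Filter.le_limsup_of_frequently_le key hbv
      have : (L - ε * k) / k = L / k - ε := by rw [sub_div, mul_div_assoc, div_self hk0.ne', mul_one]
      linarith [hge, this ▸ hge]

/- ### density of affine image -/

lemma upperDensity_image (A : Set ℕ) (k h : ℕ) (hk : 1 ≤ k) :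
    upperDensity ((fun x => k * x + h) '' A) = upperDensity A / k := by
  set φ : ℕ → ℕ := fun x => k * x + h with hφ
  have hinj : Function.Injective φ := by
    intro a b hab
    simp only [hφ] at hab
    exact Nat.eq_of_mul_eq_mul_left hk (Nat.add_right_cancel hab)
  have hfinA : ∀ n, (A ∩ Set.Icc 1 n).Finite := fun n => (Set.finite_Icc 1 n).inter_of_right A
  have hub : ∀ n, ((φ '' A) ∩ Set.Icc 1 n).ncard ≤ (A ∩ Set.Icc 1 ((n - h) / k)).ncard + 1 := by
    intro n
    have hsub : (φ '' A) ∩ Set.Icc 1 n ⊆ φ '' (insert 0 (A ∩ Set.Icc 1 ((n - h) / k))) := by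
      rintro y ⟨⟨x, hxA, rfl⟩, hy1, hy2⟩
      rcases Nat.eq_zero_or_pos x with hx0 | hx1
      · exact ⟨0, Set.mem_insert _ _, by rw [hx0]⟩
      · refine ⟨x, Set.mem_insert_of_mem _ ⟨hxA, hx1, ?_⟩, rfl⟩
        have hle : k * x ≤ n - h := Nat.le_sub_of_add_le hy2
        rw [Nat.le_div_iff_mul_le hk, Nat.mul_comm]
        exact hle
    calc ((φ '' A) ∩ Set.Icc 1 n).ncard
        ≤ (φ '' (insert 0 (A ∩ Set.Icc 1 ((n - h) / k)))).ncard :=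
          Set.ncard_le_ncard hsub (((hfinA _).insert 0).image φ)
      _ = (insert 0 (A ∩ Set.Icc 1 ((n - h) / k))).ncard := Set.ncard_image_of_injective _ hinj
      _ ≤ (A ∩ Set.Icc 1 ((n - h) / k)).ncard + 1 := Set.ncard_insert_le _ _
  have hlb : ∀ m, (A ∩ Set.Icc 1 m).ncard ≤ ((φ '' A) ∩ Set.Icc 1 (k * m + h)).ncard := by
    intro m
    have hsub : φ '' (A ∩ Set.Icc 1 m) ⊆ (φ '' A) ∩ Set.Icc 1 (k * m + h) := by
      rintro y ⟨x, ⟨hxA, hx1, hx2⟩, rfl⟩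
      refine ⟨⟨x, hxA, rfl⟩, ?_, ?_⟩
      · have h1 : k ≤ k * x := Nat.le_mul_of_pos_right k hx1
        exact le_trans hk (le_trans h1 (Nat.le_add_right _ _))
      · exact Nat.add_le_add_right (Nat.mul_le_mul le_rfl hx2) h
    calc (A ∩ Set.Icc 1 m).ncard = (φ '' (A ∩ Set.Icc 1 m)).ncard :=
          (Set.ncard_image_of_injective _ hinj).symm
      _ ≤ ((φ '' A) ∩ Set.Icc 1 (k * m + h)).ncard :=
          Set.ncard_le_ncard hsub ((Set.finite_Icc 1 _).inter_of_right _)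
  exact limsup_scale (fun n => (A ∩ Set.Icc 1 n).ncard)
    (fun n => ((φ '' A) ∩ Set.Icc 1 n).ncard) k h hk hub hlb
    (ncard_inter_Icc_le A) (ncard_inter_Icc_le (φ '' A))

/- ### AP union machinery -/

lemma isAPUnion_empty : IsAPUnion ∅ := ⟨∅, by simp, by simp⟩

lemma isAPUnion_univ : IsAPUnion Set.univ := by
  refine ⟨{(1, 0)}, by simp, ?_⟩
  ext n
  simp

lemma IsAPUnion.union {A B : Set ℕ} (hA : IsAPUnion A) (hB : IsAPUnion B) :
    IsAPUnion (A ∪ B) := by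
  classical
  obtain ⟨S, hS1, rfl⟩ := hA
  obtain ⟨T, hT1, rfl⟩ := hB
  exact ⟨S ∪ T, fun p hp => (Finset.mem_union.mp hp).elim (hS1 p) (hT1 p),
    (Finset.set_biUnion_union S T _).symm⟩

lemma isAPUnion_biUnion {ι : Type*} [DecidableEq ι] (S : Finset ι) (f : ι → Set ℕ) :
    (∀ p ∈ S, IsAPUnion (f p)) → IsAPUnion (⋃ p ∈ S, f p) := by
  induction S using Finset.induction_on with
  | empty => intro _; simpa using isAPUnion_empty
  | @insert a s ha ih =>
    intro hf
    rw [Finset.set_biUnion_insert]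
    exact IsAPUnion.union (hf _ (Finset.mem_insert_self _ _))
      (ih fun p hp => hf p (Finset.mem_insert_of_mem hp))

lemma IsAPUnion.image {A : Set ℕ} (hA : IsAPUnion A) (k h : ℕ) (hk : 1 ≤ k) :
    IsAPUnion ((fun x => k * x + h) '' A) := by
  classical
  obtain ⟨S, hS1, rfl⟩ := hA
  refine ⟨S.image (fun p => (k * p.1, k * p.2 + h)), ?_, ?_⟩
  · intro p hp
    simp only [Finset.mem_image] at hp
    obtain ⟨q, hq, rfl⟩ := hp
    exact le_trans hk (Nat.le_mul_of_pos_right k (hS1 q hq))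
  · ext n
    simp only [Set.mem_image, Set.mem_iUnion, Finset.mem_image, exists_prop, Set.mem_setOf_eq]
    constructor
    · rintro ⟨x, ⟨p, hp, m, rfl⟩, rfl⟩
      exact ⟨(k * p.1, k * p.2 + h), ⟨p, hp, rfl⟩, m, by ring⟩
    · rintro ⟨q, ⟨p, hp, rfl⟩, m, rfl⟩
      exact ⟨p.1 * m + p.2, ⟨p, hp, m, rfl⟩, by ring⟩

lemma isAPUnion_preimage_prog (k h a b : ℕ) (hk : 1 ≤ k) (ha : 1 ≤ a) :
    IsAPUnion {x : ℕ | ∃ m : ℕ, k * x + h = a * m + b} := by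
  classical
  set Q : Set ℕ := {x : ℕ | ∃ m : ℕ, k * x + h = a * m + b} with hQ
  by_cases hne : ∃ x, x ∈ Q
  case neg =>
    have hQe : Q = ∅ := by
      ext x
      simp only [Set.mem_empty_iff_false, iff_false]
      exact fun hx => hne ⟨x, hx⟩
    rw [hQe]
    exact isAPUnion_empty
  case pos =>
    set x0 := Nat.find hne with hx0def
    have hx0Q : x0 ∈ Q := Nat.find_spec hne
    have hx0min : ∀ y ∈ Q, x0 ≤ y := fun y hy => Nat.find_min' hne hy
    obtain ⟨m0, hm0⟩ := hx0Q
    set g := Nat.gcd a k with hg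
    have hg0 : 0 < g := Nat.gcd_pos_of_pos_left k ha
    have hga : g ∣ a := Nat.gcd_dvd_left a k
    have hgk : g ∣ k := Nat.gcd_dvd_right a k
    set d := a / g with hd
    have hd0 : 1 ≤ d := Nat.div_pos (Nat.le_of_dvd ha hga) hg0
    have hkd : k * d = a * (k / g) := by
      rw [hd, ← Nat.mul_div_assoc k hga, ← Nat.mul_div_assoc a hgk, Nat.mul_comm k a]
    refine ⟨{(d, x0)}, by simpa using hd0, ?_⟩
    ext x
    simp only [Finset.mem_singleton, Set.mem_iUnion, Set.mem_setOf_eq, exists_prop,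
      exists_eq_left]
    constructor
    · rintro ⟨m, hm⟩
      have hxx0 : x0 ≤ x := hx0min x ⟨m, hm⟩
      obtain ⟨t, rfl⟩ : ∃ t, x = x0 + t := ⟨x - x0, by omega⟩
      have hmm0 : m0 ≤ m := by
        have h1 : a * m0 + b ≤ a * m + b := by
          rw [← hm0, ← hm]
          have : k * x0 ≤ k * (x0 + t) := Nat.mul_le_mul le_rfl (Nat.le_add_right _ _)
          omega
        have h2 : a * m0 ≤ a * m := by omega
        exact Nat.le_of_mul_le_mul_left h2 ha
      obtain ⟨s, rfl⟩ : ∃ s, m = m0 + s := ⟨m - m0, by omega⟩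
      have hts : k * t = a * s := by
        have h1' : k * x0 + h + k * t = a * m0 + b + a * s := by
          calc k * x0 + h + k * t = k * (x0 + t) + h := by ring
            _ = a * (m0 + s) + b := hm
            _ = a * m0 + b + a * s := by ring
        rw [hm0] at h1'
        exact Nat.add_left_cancel h1'
      have hdvd : d ∣ t := by
        have hco : Nat.Coprime d (k / g) := Nat.coprime_div_gcd_div_gcd hg0
        apply hco.dvd_of_dvd_mul_left
        have heq : g * (k / g * t) = g * (d * s) := by
          calc g * (k / g * t) = g * (k / g) * t := by ring
            _ = k * t := by rw [Nat.mul_div_cancel' hgk]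
            _ = a * s := hts
            _ = g * (a / g) * s := by rw [Nat.mul_div_cancel' hga]
            _ = g * (d * s) := by rw [← hd]; ring
        exact ⟨s, Nat.eq_of_mul_eq_mul_left hg0 heq⟩
      obtain ⟨t', rfl⟩ := hdvd
      exact ⟨t', by ring⟩
    · rintro ⟨t, rfl⟩
      refine ⟨k / g * t + m0, ?_⟩
      calc k * (d * t + x0) + h = k * d * t + (k * x0 + h) := by ring
        _ = a * (k / g) * t + (a * m0 + b) := by rw [hkd, hm0]
        _ = a * (k / g * t + m0) + b := by ring

lemma IsAPUnion.preimage {B : Set ℕ} (hB : IsAPUnion B) (k h : ℕ) (hk : 1 ≤ k) :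
    IsAPUnion ((fun x => k * x + h) ⁻¹' B) := by
  classical
  obtain ⟨S, hS1, rfl⟩ := hB
  have hpre : (fun x => k * x + h) ⁻¹' (⋃ p ∈ S, {n : ℕ | ∃ m : ℕ, n = p.1 * m + p.2})
      = ⋃ p ∈ S, (fun x => k * x + h) ⁻¹' {n : ℕ | ∃ m : ℕ, n = p.1 * m + p.2} := by
    simp [Set.preimage_iUnion]
  rw [hpre]
  apply isAPUnion_biUnion
  intro p hp
  have : (fun x => k * x + h) ⁻¹' {n : ℕ | ∃ m : ℕ, n = p.1 * m + p.2}
      = {x : ℕ | ∃ m : ℕ, k * x + h = p.1 * m + p.2} := rfl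
  rw [this]
  exact isAPUnion_preimage_prog k h p.1 p.2 hk (hS1 p hp)


theorem stmt3 (X : Set ℕ) (k h : ℕ) (hk : 1 ≤ k) :
    buckUpper ((fun x => k * x + h) '' X) = buckUpper X / k := by
  have hk0 : (0:ℝ) < k := by exact_mod_cast hk
  set φ : ℕ → ℕ := fun x => k * x + h with hφ
  have hne : ∀ Y : Set ℕ,
      Set.Nonempty {d : ℝ | ∃ A, IsAPUnion A ∧ Y ⊆ A ∧ d = upperDensity A} :=
    fun Y => ⟨upperDensity Set.univ, Set.univ, isAPUnion_univ, Set.subset_univ Y, rfl⟩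
  have hbdd : ∀ Y : Set ℕ,
      BddBelow {d : ℝ | ∃ A, IsAPUnion A ∧ Y ⊆ A ∧ d = upperDensity A} := by
    intro Y
    refine ⟨0, ?_⟩
    rintro d ⟨A, _, _, rfl⟩
    exact upperDensity_nonneg A
  simp only [buckUpper]
  apply le_antisymm
  · rw [le_div_iff₀ hk0]
    apply le_csInf (hne X)
    rintro d ⟨A, hA, hXA, rfl⟩
    have h1 : upperDensity A / k ∈
        {d : ℝ | ∃ B, IsAPUnion B ∧ (φ '' X) ⊆ B ∧ d = upperDensity B} :=
      ⟨φ '' A, hA.image k h hk, Set.image_mono hXA, (upperDensity_image A k h hk).symm⟩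
    have h2 := csInf_le (hbdd (φ '' X)) h1
    exact (le_div_iff₀ hk0).mp h2
  · apply le_csInf (hne (φ '' X))
    rintro e ⟨B, hB, hXB, rfl⟩
    have hA : IsAPUnion (φ ⁻¹' B) := hB.preimage k h hk
    have hXA : X ⊆ φ ⁻¹' B := fun x hx => hXB ⟨x, hx, rfl⟩
    have h1 : sInf {d : ℝ | ∃ A, IsAPUnion A ∧ X ⊆ A ∧ d = upperDensity A}
        ≤ upperDensity (φ ⁻¹' B) := csInf_le (hbdd X) ⟨φ ⁻¹' B, hA, hXA, rfl⟩
    have h2 : upperDensity (φ ⁻¹' B) / k = upperDensity (φ '' (φ ⁻¹' B)) :=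
      (upperDensity_image (φ ⁻¹' B) k h hk).symm
    have h3 : upperDensity (φ '' (φ ⁻¹' B)) ≤ upperDensity B :=
      upperDensity_mono (Set.image_preimage_subset φ B)
    calc sInf {d : ℝ | ∃ A, IsAPUnion A ∧ X ⊆ A ∧ d = upperDensity A} / k
        ≤ upperDensity (φ ⁻¹' B) / k := by gcongr
      _ = upperDensity (φ '' (φ ⁻¹' B)) := h2
      _ ≤ upperDensity B := h3
end

section
/- A set X ⊆ ℕ has upper Buck density zero if and only if the number of residue classes modulo n! that intersect X is o(n!) as n → ∞. -/
open Filter Set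

def resSet (X : Set ℕ) (q : ℕ) : Set ℕ := {r : ℕ | r < q ∧ ∃ x ∈ X, x % q = r}

lemma resSet_finite (X : Set ℕ) (q : ℕ) : (resSet X q).Finite :=
  (Set.finite_Iio q).subset fun _ hr => hr.1

lemma resSet_mono {X A : Set ℕ} (h : X ⊆ A) (q : ℕ) : resSet X q ⊆ resSet A q :=
  fun _ hr => ⟨hr.1, hr.2.imp fun x hx => ⟨h hx.1, hx.2⟩⟩

lemma dfun_nonneg (A : Set ℕ) (n : ℕ) : 0 ≤ ((A ∩ Set.Icc 1 n).ncard : ℝ) / n := by positivity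

lemma dfun_le_one (A : Set ℕ) (n : ℕ) : ((A ∩ Set.Icc 1 n).ncard : ℝ) / n ≤ 1 := by
  rcases Nat.eq_zero_or_pos n with h | h
  · subst h; simp
  · rw [div_le_one (by exact_mod_cast h)]
    have h1 : (A ∩ Set.Icc 1 n).ncard ≤ (Set.Icc 1 n).ncard :=
      Set.ncard_le_ncard Set.inter_subset_right (Set.finite_Icc 1 n)
    have h2 : (Set.Icc 1 n).ncard = n := by
      rw [Set.ncard_eq_toFinset_card']; simp
    exact_mod_cast h2 ▸ h1

lemma upperDensity_bddf (A : Set ℕ) :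
    Filter.IsBoundedUnder (· ≤ ·) Filter.atTop (fun n : ℕ => ((A ∩ Set.Icc 1 n).ncard : ℝ) / n) :=
  Filter.isBoundedUnder_of ⟨1, dfun_le_one A⟩

lemma upperDensity_cobddf (A : Set ℕ) :
    Filter.IsCoboundedUnder (· ≤ ·) Filter.atTop (fun n : ℕ => ((A ∩ Set.Icc 1 n).ncard : ℝ) / n) :=
  (Filter.isBoundedUnder_of ⟨0, dfun_nonneg A⟩ : Filter.IsBoundedUnder (· ≥ ·) _ _).isCoboundedUnder_le


lemma exists_apunion (X : Set ℕ) (q : ℕ) (hq : 1 ≤ q) :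
    ∃ A : Set ℕ, IsAPUnion A ∧ X ⊆ A ∧
      upperDensity A ≤ ((resSet X q).ncard : ℝ) / q := by
  classical
  set R : Finset ℕ := (resSet_finite X q).toFinset with hR
  set A : Set ℕ := ⋃ r ∈ R, {n : ℕ | ∃ m : ℕ, n = q * m + r} with hA
  have hcard : (resSet X q).ncard = R.card := Set.ncard_eq_toFinset_card _ (resSet_finite X q)
  have hsubXA : X ⊆ A := by
    intro x hx
    have hr : x % q ∈ R := by
      rw [hR, Set.Finite.mem_toFinset]
      exact ⟨Nat.mod_lt x hq, x, hx, rfl⟩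
    rw [hA]
    simp only [Set.mem_iUnion]
    exact ⟨x % q, hr, x / q, (Nat.div_add_mod x q).symm⟩
  refine ⟨A, ⟨R.image fun r => (q, r), ?_, ?_⟩, hsubXA, ?_⟩
  · intro p hp
    simp only [Finset.mem_image] at hp
    obtain ⟨r, _, rfl⟩ := hp
    exact hq
  · rw [hA]
    ext n
    simp
  · -- counting
    have hcount : ∀ N : ℕ, (A ∩ Set.Icc 1 N).ncard ≤ R.card * (N / q + 1) := by
      intro N
      have hsub : A ∩ Set.Icc 1 N ⊆
          ↑((R ×ˢ Finset.range (N / q + 1)).image fun p => q * p.2 + p.1) := by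
        rintro x ⟨hxA, hx1, hxN⟩
        rw [hA] at hxA
        simp only [Set.mem_iUnion, Set.mem_setOf_eq] at hxA
        obtain ⟨r, hr, m, rfl⟩ := hxA
        simp only [Finset.coe_image, Set.mem_image, Finset.mem_coe, Finset.mem_product,
          Finset.mem_range]
        refine ⟨(r, m), ⟨hr, ?_⟩, rfl⟩
        have hm : m ≤ N / q := by
          rw [Nat.le_div_iff_mul_le hq, mul_comm]
          calc q * m ≤ q * m + r := Nat.le_add_right _ _
            _ ≤ N := hxN
        omega
      calc (A ∩ Set.Icc 1 N).ncard
          ≤ ((R ×ˢ Finset.range (N / q + 1)).image fun p => q * p.2 + p.1).card := by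
            rw [← Set.ncard_coe_finset]
            exact Set.ncard_le_ncard hsub (Finset.finite_toSet _)
        _ ≤ (R ×ˢ Finset.range (N / q + 1)).card := Finset.card_image_le
        _ = R.card * (N / q + 1) := by rw [Finset.card_product, Finset.card_range]
    set c : ℝ := (R.card : ℝ) with hc
    have hg : Filter.Tendsto (fun N : ℕ => c / q + c * (1 / N)) Filter.atTop
        (nhds (c / q)) := by
      have h1 := tendsto_one_div_atTop_nhds_zero_nat.const_mul c
      simpa using tendsto_const_nhds.add h1
    have hev : ∀ᶠ N : ℕ in Filter.atTop,
        ((A ∩ Set.Icc 1 N).ncard : ℝ) / N ≤ c / q + c * (1 / N) := by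
      filter_upwards [Filter.eventually_ge_atTop 1] with N hN
      have hN0 : (0 : ℝ) < N := by exact_mod_cast hN
      have hq0 : (0 : ℝ) < q := by exact_mod_cast hq
      have h1 : ((A ∩ Set.Icc 1 N).ncard : ℝ) ≤ c * (((N / q : ℕ) : ℝ) + 1) := by
        rw [hc]
        exact_mod_cast hcount N
      have h2 : ((N / q : ℕ) : ℝ) ≤ (N : ℝ) / q := Nat.cast_div_le
      have hc0 : (0 : ℝ) ≤ c := by rw [hc]; positivity
      have h3 : ((A ∩ Set.Icc 1 N).ncard : ℝ) ≤ c * ((N : ℝ) / q + 1) := by nlinarith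
      calc ((A ∩ Set.Icc 1 N).ncard : ℝ) / N ≤ c * ((N : ℝ) / q + 1) / N := by gcongr
        _ = c / q + c * (1 / N) := by field_simp
    rw [hcard]
    calc upperDensity A
        ≤ Filter.limsup (fun N : ℕ => c / q + c * (1 / N)) Filter.atTop :=
          Filter.limsup_le_limsup hev (upperDensity_cobddf A) hg.isBoundedUnder_le
      _ = c / q := hg.limsup_eq

lemma resSet_div_le_upperDensity (A : Set ℕ) (q : ℕ) (hq : 1 ≤ q)
    (hcl : ∀ a ∈ A, a + q ∈ A) :
    ((resSet A q).ncard : ℝ) / q ≤ upperDensity A := by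
  classical
  have hcl' : ∀ a ∈ A, ∀ t : ℕ, a + q * t ∈ A := by
    intro a ha t
    induction t with
    | zero => simpa using ha
    | succ t ih =>
        have h := hcl _ ih
        have : a + q * t + q = a + q * (t + 1) := by ring
        rwa [this] at h
  set R : Finset ℕ := (resSet_finite A q).toFinset with hR
  have hcard : (resSet A q).ncard = R.card := Set.ncard_eq_toFinset_card _ (resSet_finite A q)
  set w : ℕ → ℕ := fun r => if h : ∃ x ∈ A, x % q = r then h.choose else 0 with hwdef
  have hw : ∀ r ∈ R, w r ∈ A ∧ w r % q = r := by
    intro r hr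
    rw [hR, Set.Finite.mem_toFinset] at hr
    obtain ⟨-, hx⟩ := hr
    rw [hwdef]
    simp only [dif_pos hx]
    exact hx.choose_spec
  set H : ℕ := R.sup w with hH
  -- counting lower bound
  have hcount : ∀ N : ℕ, H ≤ N →
      R.card * ((N - H) / q - 1) ≤ (A ∩ Set.Icc 1 N).ncard := by
    intro N hHN
    set M : ℕ := (N - H) / q - 1 with hM
    set T : Finset ℕ := (R ×ˢ Finset.range M).image fun p => w p.1 + q * (p.2 + 1) with hT
    have hinj : Set.InjOn (fun p : ℕ × ℕ => w p.1 + q * (p.2 + 1)) ↑(R ×ˢ Finset.range M) := by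
      rintro ⟨r, j⟩ hp ⟨r', j'⟩ hp' heq
      simp only [Finset.coe_product, Set.mem_prod, Finset.mem_coe, Finset.mem_range] at hp hp'
      have h1 : (w r + q * (j + 1)) % q = r := by
        rw [Nat.add_mul_mod_self_left]
        exact (hw r hp.1).2
      have h2 : (w r' + q * (j' + 1)) % q = r' := by
        rw [Nat.add_mul_mod_self_left]
        exact (hw r' hp'.1).2
      have heq' : w r + q * (j + 1) = w r' + q * (j' + 1) := heq
      have hrr : r = r' := by rw [← h1, ← h2, heq']
      subst hrr
      have : j = j' := by
        have := Nat.add_left_cancel heq'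
        have h3 : j + 1 = j' + 1 := Nat.eq_of_mul_eq_mul_left hq this
        omega
      simp [this]
    have hsub : ↑T ⊆ A ∩ Set.Icc 1 N := by
      intro x hx
      rw [hT] at hx
      simp only [Finset.coe_image, Set.mem_image, Finset.mem_coe, Finset.mem_product,
        Finset.mem_range] at hx
      obtain ⟨⟨r, j⟩, ⟨hr, hj⟩, rfl⟩ := hx
      have h0 : 1 ≤ q * (j + 1) := Nat.mul_pos hq (Nat.succ_pos j)
      have h1 : w r ≤ H := Finset.le_sup hr
      have h2 : j + 1 ≤ M := hj
      have h3 : q * (j + 1) ≤ q * M := Nat.mul_le_mul_left q h2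
      have h4 : q * M ≤ N - H := by
        calc q * M ≤ q * ((N - H) / q) := Nat.mul_le_mul_left q (by omega)
          _ = (N - H) / q * q := by ring
          _ ≤ N - H := Nat.div_mul_le_self _ _
      refine ⟨hcl' _ (hw r hr).1 (j + 1), ?_⟩
      simp only [Set.mem_Icc]
      omega
    calc R.card * M = (R ×ˢ Finset.range M).card := by
          rw [Finset.card_product, Finset.card_range]
      _ = T.card := (Finset.card_image_of_injOn hinj).symm
      _ = (↑T : Set ℕ).ncard := (Set.ncard_coe_finset T).symm
      _ ≤ (A ∩ Set.Icc 1 N).ncard :=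
          Set.ncard_le_ncard hsub ((Set.finite_Icc 1 N).subset Set.inter_subset_right)
  -- arithmetic: N ≤ q * M + H + 2q
  have hkey : ∀ N : ℕ, H ≤ N → N ≤ q * ((N - H) / q - 1) + H + 2 * q := by
    intro N hHN
    set D : ℕ := (N - H) / q with hD
    have h1 : q * D + (N - H) % q = N - H := Nat.div_add_mod _ _
    have h2 : (N - H) % q < q := Nat.mod_lt _ hq
    have h3 : q * D ≤ q * (D - 1) + q := by
      calc q * D ≤ q * ((D - 1) + 1) := Nat.mul_le_mul_left q (by omega)
        _ = q * (D - 1) + q := by ring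
    omega
  -- real part
  set c : ℝ := (R.card : ℝ) with hc
  have hc0 : (0 : ℝ) ≤ c := by rw [hc]; positivity
  have hq0 : (0 : ℝ) < q := by exact_mod_cast hq
  set g : ℕ → ℝ := fun N => c / q - (c * ((H : ℝ) + 2 * q) / q) * (1 / N) with hg
  have hgt : Filter.Tendsto g Filter.atTop (nhds (c / q)) := by
    have h1 := tendsto_one_div_atTop_nhds_zero_nat.const_mul (c * ((H : ℝ) + 2 * q) / q)
    simpa [hg] using tendsto_const_nhds.sub h1
  have hev : ∀ᶠ N : ℕ in Filter.atTop,
      g N ≤ ((A ∩ Set.Icc 1 N).ncard : ℝ) / N := by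
    filter_upwards [Filter.eventually_ge_atTop (max H 1)] with N hN
    have hHN : H ≤ N := le_trans (le_max_left _ _) hN
    have hN1 : 1 ≤ N := le_trans (le_max_right _ _) hN
    have hN0 : (0 : ℝ) < N := by exact_mod_cast hN1
    set M : ℕ := (N - H) / q - 1 with hM
    have h1 : (c : ℝ) * M ≤ ((A ∩ Set.Icc 1 N).ncard : ℝ) := by
      rw [hc]
      exact_mod_cast hcount N hHN
    have h2 : (N : ℝ) ≤ q * M + H + 2 * q := by exact_mod_cast hkey N hHN
    have key2 : c * (N : ℝ) ≤ c * M * q + c * ((H : ℝ) + 2 * q) := by nlinarith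
    have step : g N ≤ c * (M : ℝ) / N := by
      rw [hg]
      simp only
      rw [le_div_iff₀ hN0]
      have expand : (c / q - (c * ((H : ℝ) + 2 * q) / q) * (1 / N)) * N
          = (c * N - c * ((H : ℝ) + 2 * q)) / q := by
        field_simp
      rw [expand, div_le_iff₀ hq0]
      linarith
    calc g N ≤ c * (M : ℝ) / N := step
      _ ≤ ((A ∩ Set.Icc 1 N).ncard : ℝ) / N := by gcongr
  rw [hcard]
  calc (R.card : ℝ) / q = Filter.limsup g Filter.atTop := (hgt.limsup_eq).symm
    _ ≤ upperDensity A :=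
      Filter.limsup_le_limsup hev hgt.isBoundedUnder_ge.isCoboundedUnder_le
        (upperDensity_bddf A)

lemma apunion_closed {A : Set ℕ} {S : Finset (ℕ × ℕ)}
    (hA : A = ⋃ p ∈ S, {n : ℕ | ∃ m : ℕ, n = p.1 * m + p.2}) {q : ℕ}
    (hdvd : ∀ p ∈ S, p.1 ∣ q) : ∀ a ∈ A, a + q ∈ A := by
  intro a ha
  rw [hA] at ha ⊢
  simp only [Set.mem_iUnion, Set.mem_setOf_eq] at ha ⊢
  obtain ⟨p, hp, m, rfl⟩ := ha
  obtain ⟨t, rfl⟩ := hdvd p hp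
  exact ⟨p, hp, m + t, by ring⟩


theorem stmt6 (X : Set ℕ) :
    buckUpper X = 0 ↔
      Filter.Tendsto
        (fun n : ℕ => ({r : ℕ | r < Nat.factorial n ∧ ∃ x ∈ X, x % Nat.factorial n = r}.ncard : ℝ) / Nat.factorial n)
        Filter.atTop (nhds 0) := by
  have hfn : (fun n : ℕ => ({r : ℕ | r < Nat.factorial n ∧ ∃ x ∈ X, x % Nat.factorial n = r}.ncard : ℝ) / Nat.factorial n)
      = fun n : ℕ => ((resSet X (Nat.factorial n)).ncard : ℝ) / Nat.factorial n := rfl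
  rw [hfn]
  set Ω : Set ℝ := {d : ℝ | ∃ A : Set ℕ, IsAPUnion A ∧ X ⊆ A ∧ d = upperDensity A} with hΩ
  have hne : Ω.Nonempty := by
    refine ⟨upperDensity Set.univ, Set.univ, ⟨{(1, 0)}, ?_, ?_⟩, Set.subset_univ X, rfl⟩
    · intro p hp; simp at hp; simp [hp]
    · ext n
      simp only [Finset.mem_singleton, Set.iUnion_iUnion_eq_left, Set.mem_univ, true_iff]
      exact ⟨n, by simp⟩
  have hbdd : ∀ d ∈ Ω, (0 : ℝ) ≤ d := by
    rintro d ⟨A, -, -, rfl⟩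
    exact upperDensity_nonneg A
  have hbU : buckUpper X = sInf Ω := rfl
  constructor
  · intro h0
    rw [Metric.tendsto_atTop]
    intro ε hε
    have hlt : sInf Ω < ε := by rw [← hbU, h0]; exact hε
    obtain ⟨d, hdΩ, hdε⟩ := exists_lt_of_csInf_lt hne hlt
    obtain ⟨A, ⟨S, hS1, hS2⟩, hXA, rfl⟩ := hdΩ
    refine ⟨S.sup (fun p => p.1), fun n hn => ?_⟩
    set q : ℕ := Nat.factorial n with hqdef
    have hq : 1 ≤ q := Nat.factorial_pos n
    have hdvd : ∀ p ∈ S, p.1 ∣ q := fun p hp =>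
      Nat.dvd_factorial (hS1 p hp) (le_trans (Finset.le_sup (f := fun p : ℕ × ℕ => p.1) hp) hn)
    have hcl := apunion_closed hS2 hdvd
    have h2 : ((resSet A q).ncard : ℝ) / q ≤ upperDensity A :=
      resSet_div_le_upperDensity A q hq hcl
    have h3 : ((resSet X q).ncard : ℝ) ≤ ((resSet A q).ncard : ℝ) := by
      exact_mod_cast Set.ncard_le_ncard (resSet_mono hXA q) (resSet_finite A q)
    have hq0 : (0 : ℝ) < q := by exact_mod_cast hq
    rw [Real.dist_eq, sub_zero, abs_of_nonneg (by positivity)]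
    calc ((resSet X q).ncard : ℝ) / q ≤ ((resSet A q).ncard : ℝ) / q := by gcongr
      _ ≤ upperDensity A := h2
      _ < ε := hdε
  · intro h
    refine le_antisymm ?_ (Real.sInf_nonneg hbdd)
    refine ge_of_tendsto h (Filter.Eventually.of_forall fun n => ?_)
    obtain ⟨A, hAP, hXA, hle⟩ := exists_apunion X (Nat.factorial n) (Nat.factorial_pos n)
    calc buckUpper X ≤ upperDensity A := csInf_le ⟨0, hbdd⟩ ⟨A, hAP, hXA, rfl⟩
      _ ≤ ((resSet X (Nat.factorial n)).ncard : ℝ) / Nat.factorial n := hle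
end

section
/- Every arithmetic upper quasi-density μ* satisfies 𝔟_*(X) ≤ μ_*(X) ≤ μ*(X) ≤ 𝔟*(X) for all X ⊆ ℕ, where μ_* is the conjugate of μ* and 𝔟*, 𝔟_* are the upper and lower Buck densities. -/
open Filter Set

/-- Conjugate (lower) quasi-density. -/
lemma mu_empty (μ : ArithUpperQuasiDensity) : μ.toFun ∅ = 0 := by
  have h := μ.scale ∅ 2 0 (by norm_num)
  simp only [Set.image_empty, Nat.cast_ofNat] at h
  linarith

lemma mu_nonneg (μ : ArithUpperQuasiDensity) (X : Set ℕ) : 0 ≤ μ.toFun X := by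
  have h := μ.subadd X Xᶜ
  rw [Set.union_compl_self, μ.univ_eq] at h
  have := μ.le_one Xᶜ
  linarith

lemma mu_finsum (μ : ArithUpperQuasiDensity) {ι : Type*} [DecidableEq ι]
    (R : Finset ι) (Y : ι → Set ℕ) :
    μ.toFun (⋃ r ∈ R, Y r) ≤ ∑ r ∈ R, μ.toFun (Y r) := by
  induction R using Finset.induction with
  | empty => simp [mu_empty μ]
  | insert _ _ ha ih =>
    rename_i a s
    rw [Finset.set_biUnion_insert, Finset.sum_insert ha]
    exact le_trans (μ.subadd _ _) (by linarith)

lemma mu_subclass (μ : ArithUpperQuasiDensity) (Y : Set ℕ) (L r : ℕ)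
    (hL : 1 ≤ L) (hr : r < L) (hY : ∀ n ∈ Y, n % L = r) :
    μ.toFun Y ≤ 1 / L := by
  have himg : Y = (fun x => L * x + r) '' ((fun x => L * x + r) ⁻¹' Y) := by
    apply Set.Subset.antisymm _ (Set.image_preimage_subset _ _)
    intro n hn
    have hm : L * (n / L) + r = n := by
      have := Nat.div_add_mod n L
      have := hY n hn
      omega
    exact ⟨n / L, by simp [Set.mem_preimage, hm, hn], hm⟩
  rw [himg, μ.scale _ L r hL]
  have hL' : (0:ℝ) < L := by exact_mod_cast hL
  rw [div_le_div_iff₀ hL' hL']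
  nlinarith [μ.le_one ((fun x => L * x + r) ⁻¹' Y)]

lemma upperDensity_ge (A : Set ℕ) (L H mR : ℕ) (hL : 1 ≤ L) (hH : 1 ≤ H)
    (hcount : ∀ q : ℕ, H ≤ q → (mR * (q - H) : ℕ) ≤ (A ∩ Set.Icc 1 (L * q)).ncard) :
    (mR : ℝ) / L ≤ upperDensity A := by
  have hL' : (0:ℝ) < L := by exact_mod_cast hL
  set f : ℕ → ℝ := fun n : ℕ => ((A ∩ Set.Icc 1 n).ncard : ℝ) / n with hf
  have hbdd : Filter.IsBoundedUnder (· ≤ ·) Filter.atTop f := by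
    refine ⟨1, Filter.eventually_map.mpr ?_⟩
    filter_upwards [Filter.eventually_ge_atTop 1] with n hn
    have hsub : (A ∩ Set.Icc 1 n).ncard ≤ n := by
      have h1 : (A ∩ Set.Icc 1 n).ncard ≤ (Set.Icc 1 n).ncard :=
        Set.ncard_le_ncard Set.inter_subset_right (Set.finite_Icc 1 n)
      have h2 : (Set.Icc 1 n).ncard = n := by
        rw [← Finset.coe_Icc, Set.ncard_coe_finset, Nat.card_Icc]; omega
      omega
    have hn' : (0:ℝ) < n := by exact_mod_cast hn
    rw [hf, div_le_one hn']
    exact_mod_cast hsub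
  apply le_of_forall_sub_le
  intro ε hε
  apply Filter.le_limsup_of_frequently_le _ hbdd
  rw [Filter.frequently_atTop]
  intro a
  obtain ⟨Q, hQ⟩ := exists_nat_ge ((mR : ℝ) * H / (L * ε))
  set q := max a (max H Q) with hq
  have hqH : H ≤ q := le_trans (le_max_left _ _) (le_max_right _ _)
  have hqQ : Q ≤ q := le_trans (le_max_right _ _) (le_max_right _ _)
  have hq1 : 1 ≤ q := le_trans hH hqH
  refine ⟨L * q, le_trans (le_max_left _ _) (Nat.le_mul_of_pos_left q (by omega)), ?_⟩
  have hq' : (0:ℝ) < q := by exact_mod_cast hq1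
  have hLq : (0:ℝ) < L * q := by positivity
  -- f (L*q) ≥ mR*(q-H)/(L*q)
  have hcast : ((mR * (q - H) : ℕ) : ℝ) = mR * ((q:ℝ) - H) := by
    push_cast [Nat.cast_sub hqH]; ring
  have h1 : (mR : ℝ) * ((q:ℝ) - H) / (L * q) ≤ f (L * q) := by
    rw [hf]
    simp only
    rw [Nat.cast_mul]
    gcongr
    calc (mR : ℝ) * ((q:ℝ) - H) = ((mR * (q - H) : ℕ) : ℝ) := hcast.symm
      _ ≤ _ := by exact_mod_cast hcount q hqH
  -- mR/L - ε ≤ mR*(q-H)/(L*q)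
  have h2 : (mR : ℝ) / L - ε ≤ (mR : ℝ) * ((q:ℝ) - H) / (L * q) := by
    have hQ' : (mR : ℝ) * H ≤ Q * (L * ε) := by
      rw [div_le_iff₀ (by positivity)] at hQ; linarith
    have hqQ' : (Q:ℝ) ≤ q := by exact_mod_cast hqQ
    have h3 : (mR : ℝ) * H / (L * q) ≤ ε := by
      rw [div_le_iff₀ hLq]
      have h4 : (Q:ℝ) * (L * ε) ≤ q * (L * ε) :=
        mul_le_mul_of_nonneg_right hqQ' (by positivity)
      nlinarith
    have heq : (mR : ℝ) * ((q:ℝ) - H) / (L * q) = mR / L - mR * H / (L * q) := by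
      field_simp
    linarith [heq]
  linarith

lemma mu_le_buckUpper (μ : ArithUpperQuasiDensity) (X : Set ℕ) :
    μ.toFun X ≤ buckUpper X := by
  classical
  apply le_csInf
  · refine ⟨upperDensity Set.univ, Set.univ, ⟨{(1,0)}, by simp, ?_⟩,
      Set.subset_univ X, rfl⟩
    ext n; simp
  rintro d ⟨A, ⟨S, hS1, rfl⟩, hXA, rfl⟩
  set L := ∏ p ∈ S, p.1 with hLdef
  have hL : 1 ≤ L := Finset.one_le_prod' hS1
  have hdvd : ∀ p ∈ S, p.1 ∣ L := fun p hp => Finset.dvd_prod_of_mem _ hp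
  set H := 1 + S.sup (fun p => p.2) with hHdef
  have hH : 1 ≤ H := by omega
  set R : Finset ℕ :=
    (Finset.range L).filter (fun r => ∃ p ∈ S, r % p.1 = p.2 % p.1) with hRdef
  -- every element of X has residue in R
  have hXB : ∀ n ∈ X, n % L ∈ R := by
    intro n hn
    have hnA := hXA hn
    simp only [Set.mem_iUnion] at hnA
    obtain ⟨p, hp, m, hm⟩ := hnA
    refine Finset.mem_filter.mpr ⟨Finset.mem_range.mpr (Nat.mod_lt n (by omega)), p, hp, ?_⟩
    rw [Nat.mod_mod_of_dvd n (hdvd p hp), hm, Nat.mul_add_mod]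
  -- μ X ≤ |R| / L
  have h1 : μ.toFun X ≤ (R.card : ℝ) / L := by
    have hXeq : X = ⋃ r ∈ R, (X ∩ {n | n % L = r}) := by
      apply Set.Subset.antisymm
      · intro n hn
        exact Set.mem_biUnion (hXB n hn) ⟨hn, rfl⟩
      · intro n hn
        simp only [Set.mem_iUnion, Set.mem_inter_iff] at hn
        obtain ⟨r, _, hn, _⟩ := hn
        exact hn
    calc μ.toFun X = μ.toFun (⋃ r ∈ R, (X ∩ {n | n % L = r})) := by rw [← hXeq]
      _ ≤ ∑ r ∈ R, μ.toFun (X ∩ {n | n % L = r}) := mu_finsum μ R _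
      _ ≤ ∑ _r ∈ R, (1:ℝ) / L := by
          apply Finset.sum_le_sum
          intro r hr
          have hrL : r < L := Finset.mem_range.mp (Finset.mem_filter.mp hr).1
          exact mu_subclass μ _ L r hL hrL (fun n hn => hn.2)
      _ = (R.card : ℝ) / L := by rw [Finset.sum_const]; push_cast; ring
  -- counting lower bound
  have hcount : ∀ q : ℕ, H ≤ q →
      (R.card * (q - H) : ℕ) ≤
        ((⋃ p ∈ S, {n : ℕ | ∃ m : ℕ, n = p.1 * m + p.2}) ∩ Set.Icc 1 (L * q)).ncard := by
    intro q hq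
    set T : Finset ℕ := ((Finset.Ico H q) ×ˢ R).image (fun ir => L * ir.1 + ir.2) with hT
    have hTcard : T.card = R.card * (q - H) := by
      rw [hT, Finset.card_image_of_injOn, Finset.card_product, Nat.card_Ico]
      · ring
      · intro x hx y hy hxy
        simp only [Finset.coe_product, Set.mem_prod, Finset.mem_coe, Finset.mem_Ico] at hx hy
        have hx2 : x.2 < L := Finset.mem_range.mp (Finset.mem_filter.mp hx.2).1
        have hy2 : y.2 < L := Finset.mem_range.mp (Finset.mem_filter.mp hy.2).1
        have h2 : x.2 = y.2 := by
          have := congrArg (· % L) hxy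
          simpa [Nat.mul_add_mod, Nat.mod_eq_of_lt hx2, Nat.mod_eq_of_lt hy2] using this
        have h1' : x.1 = y.1 := by
          have hxy' : L * x.1 + x.2 = L * y.1 + y.2 := hxy
          rw [h2] at hxy'
          exact Nat.eq_of_mul_eq_mul_left (by omega) (Nat.add_right_cancel hxy')
        exact Prod.ext h1' h2
    have hTsub : (T : Set ℕ) ⊆
        (⋃ p ∈ S, {n : ℕ | ∃ m : ℕ, n = p.1 * m + p.2}) ∩ Set.Icc 1 (L * q) := by
      intro n hn
      simp only [hT, Finset.coe_image, Set.mem_image, Finset.mem_coe,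
        Finset.mem_product, Finset.mem_Ico] at hn
      obtain ⟨⟨i, r⟩, ⟨⟨hiH, hiq⟩, hrR⟩, rfl⟩ := hn
      dsimp only at hiH hiq hrR ⊢
      have hrL : r < L := Finset.mem_range.mp (Finset.mem_filter.mp hrR).1
      obtain ⟨p, hp, hrp⟩ := (Finset.mem_filter.mp hrR).2
      have hk1 : 1 ≤ p.1 := hS1 p hp
      have hiL : i ≤ L * i := Nat.le_mul_of_pos_left i (by omega)
      constructor
      · -- membership in the union
        have hp2 : p.2 < H := by
          have := Finset.le_sup (f := fun p => p.2) hp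
          omega
      -- n ≥ p.2
        have hge : p.2 ≤ L * i + r := by omega
        have hmod : (L * i + r) % p.1 = p.2 % p.1 := by
          obtain ⟨c, hc⟩ := hdvd p hp
          rw [hc, mul_assoc, Nat.mul_add_mod]
          exact hrp
        have hdvd2 : p.1 ∣ (L * i + r) - p.2 :=
          (Nat.modEq_iff_dvd' hge).mp (Nat.ModEq.symm hmod)
        obtain ⟨m, hm⟩ := hdvd2
        exact Set.mem_biUnion hp ⟨m, (Nat.sub_eq_iff_eq_add hge).mp hm⟩
      · refine Set.mem_Icc.mpr ⟨by omega, ?_⟩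
        have h4 : L * (i + 1) = L * i + L := by ring
        have h5 : L * (i + 1) ≤ L * q := Nat.mul_le_mul_left L (by omega)
        omega
    calc (R.card * (q - H) : ℕ) = T.card := by rw [hTcard]
      _ = (T : Set ℕ).ncard := (Set.ncard_coe_finset T).symm
      _ ≤ _ := Set.ncard_le_ncard hTsub
              ((Set.finite_Icc 1 (L * q)).inter_of_right _)
  exact h1.trans (upperDensity_ge _ L H R.card hL hH hcount)

theorem stmt12 (μ : ArithUpperQuasiDensity) (X : Set ℕ) :
    buckLower X ≤ μ.conj X ∧ μ.conj X ≤ μ.toFun X ∧ μ.toFun X ≤ buckUpper X := by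
  have key : ∀ Y : Set ℕ, μ.toFun Y ≤ buckUpper Y := fun Y => mu_le_buckUpper μ Y
  have h2 : μ.conj X ≤ μ.toFun X := by
    have h := μ.subadd X Xᶜ
    rw [Set.union_compl_self, μ.univ_eq] at h
    unfold ArithUpperQuasiDensity.conj
    linarith
  refine ⟨?_, h2, key X⟩
  unfold buckLower ArithUpperQuasiDensity.conj
  linarith [key Xᶜ]
end

section
/- Let B ⊆ ℕ be nonempty with upper Buck density zero. Then for every α ∈ [0,1] there exists A ⊆ ℕ such that both A and the sumset A + B have well-defined Buck density (upper equals lower), and 𝔟(A + B) = α. -/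
open Filter Set

namespace BuckProof

open Classical in
/-- counting function -/
noncomputable def cntF (X : Set ℕ) (n : ℕ) : ℕ :=
  ((Finset.Icc 1 n).filter (fun y => y ∈ X)).card

lemma cntF_le (X : Set ℕ) (n : ℕ) : cntF X n ≤ n := by
  classical
  calc cntF X n ≤ (Finset.Icc 1 n).card := by
        unfold cntF
        convert Finset.card_filter_le _ _ using 2
    _ = n := by rw [Nat.card_Icc]; omega

lemma upperDensity_eq (X : Set ℕ) :
    upperDensity X = limsup (fun n : ℕ => (cntF X n : ℝ) / n) atTop := by
  classical
  unfold upperDensity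
  congr 1
  funext n
  congr 2
  have : X ∩ Set.Icc 1 n = ((Finset.Icc 1 n).filter (fun y => y ∈ X) : Finset ℕ) := by
    ext y
    simp only [Finset.coe_filter, Finset.mem_Icc, Set.mem_inter_iff, Set.mem_Icc,
      Set.mem_setOf_eq]
    tauto
  rw [this, Set.ncard_coe_finset]
  rfl

lemma cntF_mono {X Y : Set ℕ} (h : X ⊆ Y) (n : ℕ) : cntF X n ≤ cntF Y n := by
  classical
  apply Finset.card_le_card
  intro y hy
  simp only [cntF, Finset.mem_filter] at *
  exact ⟨hy.1, h hy.2⟩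

lemma cntF_nonneg_real (X : Set ℕ) (n : ℕ) : (0:ℝ) ≤ (cntF X n : ℝ) / n := by positivity

lemma cntF_div_le_one (X : Set ℕ) (n : ℕ) : (cntF X n : ℝ) / n ≤ 1 := by
  rcases Nat.eq_zero_or_pos n with h | h
  · simp [h]
  · rw [div_le_one (by exact_mod_cast h)]
    exact_mod_cast cntF_le X n

lemma bddAbove_cnt (X : Set ℕ) :
    IsBoundedUnder (· ≤ ·) atTop (fun n : ℕ => (cntF X n : ℝ) / n) :=
  Filter.isBoundedUnder_of ⟨1, cntF_div_le_one X⟩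

lemma cobdd_cnt (X : Set ℕ) :
    IsCoboundedUnder (· ≤ ·) atTop (fun n : ℕ => (cntF X n : ℝ) / n) := by
  have : IsBoundedUnder (· ≥ ·) atTop (fun n : ℕ => (cntF X n : ℝ) / n) :=
    Filter.isBoundedUnder_of ⟨0, fun n => cntF_nonneg_real X n⟩
  exact this.isCoboundedUnder_le

lemma upperDensity_nonneg (X : Set ℕ) : 0 ≤ upperDensity X := by
  rw [upperDensity_eq]
  refine Filter.le_limsup_of_frequently_le ?_ (bddAbove_cnt X)
  exact Filter.Frequently.of_forall fun n => cntF_nonneg_real X n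

/-- upper bound on limsup from eventual bounds up to ε -/
lemma limsup_le_of_eps {f : ℕ → ℝ} (hc : IsCoboundedUnder (· ≤ ·) atTop f) {c : ℝ}
    (h : ∀ ε : ℝ, 0 < ε → ∀ᶠ n in atTop, f n ≤ c + ε) : limsup f atTop ≤ c := by
  by_contra hlt
  push_neg at hlt
  have hε : 0 < (limsup f atTop - c) / 2 := by linarith
  have := Filter.limsup_le_of_le hc (h _ hε)
  linarith

lemma le_limsup_of_eps {f : ℕ → ℝ} (hb : IsBoundedUnder (· ≤ ·) atTop f) {c : ℝ}
    (h : ∀ ε : ℝ, 0 < ε → ∀ᶠ n in atTop, c - ε ≤ f n) : c ≤ limsup f atTop := by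
  by_contra hlt
  push_neg at hlt
  have hε : 0 < (c - limsup f atTop) / 2 := by linarith
  have := Filter.le_limsup_of_frequently_le ((h _ hε).frequently) hb
  linarith
-- appended to part1
def APu (S : Finset (ℕ × ℕ)) : Set ℕ := ⋃ p ∈ S, {n : ℕ | ∃ m : ℕ, n = p.1 * m + p.2}

lemma isAPUnion_APu (S : Finset (ℕ × ℕ)) (hS : ∀ p ∈ S, 1 ≤ p.1) : IsAPUnion (APu S) :=
  ⟨S, hS, rfl⟩

lemma cntF_AP_le (k h n : ℕ) (hk : 1 ≤ k) :
    cntF {x : ℕ | ∃ m : ℕ, x = k * m + h} n ≤ n / k + 1 := by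
  classical
  unfold cntF
  have hsub : ((Finset.Icc 1 n).filter (fun y => y ∈ {x : ℕ | ∃ m : ℕ, x = k * m + h}))
      ⊆ (Finset.range (n / k + 1)).image (fun m => k * m + h) := by
    intro y hy
    simp only [Finset.mem_filter, Finset.mem_Icc, Set.mem_setOf_eq] at hy
    obtain ⟨⟨hy1, hy2⟩, m, rfl⟩ := hy
    refine Finset.mem_image.2 ⟨m, Finset.mem_range.2 ?_, rfl⟩
    have : k * m ≤ n := le_trans (Nat.le_add_right _ _) hy2
    have hmk : m * k ≤ n := by nlinarith
    have : m ≤ n / k := (Nat.le_div_iff_mul_le (by omega)).2 hmk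
    omega
  calc _ ≤ ((Finset.range (n / k + 1)).image (fun m => k * m + h)).card :=
        Finset.card_le_card hsub
    _ ≤ (Finset.range (n / k + 1)).card := Finset.card_image_le
    _ = n / k + 1 := Finset.card_range _

lemma cntF_APu_le (S : Finset (ℕ × ℕ)) (hS : ∀ p ∈ S, 1 ≤ p.1) (n : ℕ) :
    cntF (APu S) n ≤ ∑ p ∈ S, (n / p.1 + 1) := by
  classical
  unfold cntF
  have hsub : ((Finset.Icc 1 n).filter (fun y => y ∈ APu S))
      ⊆ S.biUnion (fun p => (Finset.Icc 1 n).filter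
        (fun y => y ∈ {x : ℕ | ∃ m : ℕ, x = p.1 * m + p.2})) := by
    intro y hy
    simp only [Finset.mem_filter, APu, Set.mem_iUnion] at hy
    obtain ⟨hy1, p, hp, hyp⟩ := hy
    exact Finset.mem_biUnion.2 ⟨p, hp, Finset.mem_filter.2 ⟨hy1, hyp⟩⟩
  calc _ ≤ _ := Finset.card_le_card hsub
    _ ≤ ∑ p ∈ S, ((Finset.Icc 1 n).filter
        (fun y => y ∈ {x : ℕ | ∃ m : ℕ, x = p.1 * m + p.2})).card := Finset.card_biUnion_le
    _ ≤ ∑ p ∈ S, (n / p.1 + 1) := Finset.sum_le_sum (fun p hp => cntF_AP_le _ _ _ (hS p hp))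

lemma nat_div_cast_le (a k : ℕ) : ((a / k : ℕ) : ℝ) ≤ (a : ℝ) / k := by
  rcases Nat.eq_zero_or_pos k with hk | hk
  · simp [hk]
  rw [le_div_iff₀ (by exact_mod_cast hk)]
  exact_mod_cast Nat.div_mul_le_self a k

lemma nat_div_cast_ge (a k : ℕ) (hk : 0 < k) : (a : ℝ) / k - 1 ≤ ((a / k : ℕ) : ℝ) := by
  have h1 : a < k * (a / k) + k := by
    have h2 := Nat.div_add_mod a k
    have h3 := Nat.mod_lt a hk
    omega
  have h2 : (a : ℝ) < k * ((a / k : ℕ) : ℝ) + k := by exact_mod_cast h1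
  have hk' : (0:ℝ) < k := by exact_mod_cast hk
  rw [sub_le_iff_le_add, div_le_iff₀ hk']
  nlinarith

lemma upperDensity_APu_le (S : Finset (ℕ × ℕ)) (hS : ∀ p ∈ S, 1 ≤ p.1) :
    upperDensity (APu S) ≤ ∑ p ∈ S, (1 : ℝ) / p.1 := by
  rw [upperDensity_eq]
  apply limsup_le_of_eps (cobdd_cnt _)
  intro ε hε
  obtain ⟨n₀, hn₀⟩ := exists_nat_gt ((S.card : ℝ) / ε)
  filter_upwards [Filter.eventually_ge_atTop (max n₀ 1)] with n hn
  have hn1 : 1 ≤ n := le_trans (le_max_right _ _) hn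
  have hnR : (0:ℝ) < n := by exact_mod_cast hn1
  have hcnt : (cntF (APu S) n : ℝ) ≤ ∑ p ∈ S, ((n / p.1 + 1 : ℕ) : ℝ) := by
    exact_mod_cast cntF_APu_le S hS n
  have hsum : ∑ p ∈ S, ((n / p.1 + 1 : ℕ) : ℝ) ≤ (∑ p ∈ S, (n : ℝ) / p.1) + S.card := by
    rw [Finset.cast_card]
    rw [← Finset.sum_add_distrib]
    apply Finset.sum_le_sum
    intro p hp
    push_cast
    have := nat_div_cast_le n p.1
    linarith
  have hdiv : ∀ p ∈ S, (n : ℝ) / p.1 = n * (1 / p.1) := by intro p hp; ring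
  rw [div_le_iff₀ hnR]
  have hcard : (S.card : ℝ) ≤ ε * n := by
    have hn₀n : (n₀ : ℝ) ≤ n := by exact_mod_cast le_trans (le_max_left _ _) hn
    have : (S.card : ℝ) / ε < n := lt_of_lt_of_le hn₀ hn₀n
    rw [div_lt_iff₀ hε] at this
    nlinarith
  calc (cntF (APu S) n : ℝ) ≤ (∑ p ∈ S, (n : ℝ) / p.1) + S.card := le_trans hcnt hsum
    _ = (∑ p ∈ S, (1:ℝ) / p.1) * n + S.card := by
        rw [Finset.sum_mul]
        congr 1
        apply Finset.sum_congr rfl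
        intro p hp; ring
    _ ≤ (∑ p ∈ S, (1:ℝ) / p.1) * n + ε * n := by linarith
    _ = ((∑ p ∈ S, (1:ℝ) / p.1) + ε) * n := by ring
lemma cast_nat_sub_ge (a b : ℕ) : (a : ℝ) - b ≤ ((a - b : ℕ) : ℝ) := by
  rcases le_total b a with h | h
  · rw [Nat.cast_sub h]
  · have h1 : a - b = 0 := Nat.sub_eq_zero_of_le h
    rw [h1]
    have : (a:ℝ) ≤ b := by exact_mod_cast h
    simpa using this

lemma cntF_tails_ge (X : Set ℕ) (N : ℕ) (hN : 0 < N) (R : Finset ℕ) (hR : ∀ r ∈ R, r < N)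
    (M : ℕ) (h : ∀ r ∈ R, ∀ y, y % N = r → M ≤ y → y ∈ X) (n : ℕ) :
    R.card * ((n + 1) / N - (M + 1)) ≤ cntF X n := by
  classical
  set T : Finset ℕ := R.biUnion
    (fun r => (Finset.Icc (M + 1) ((n + 1) / N - 1)).image (fun m => N * m + r)) with hT
  have hmemT : ∀ y ∈ T, ∃ r ∈ R, ∃ m, M + 1 ≤ m ∧ m ≤ (n + 1) / N - 1 ∧ y = N * m + r := by
    intro y hy
    simp only [hT, Finset.mem_biUnion, Finset.mem_image, Finset.mem_Icc] at hy
    obtain ⟨r, hr, m, ⟨hm1, hm2⟩, rfl⟩ := hy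
    exact ⟨r, hr, m, hm1, hm2, rfl⟩
  have hsub : T ⊆ (Finset.Icc 1 n).filter (fun y => y ∈ X) := by
    intro y hy
    obtain ⟨r, hr, m, hm1, hm2, rfl⟩ := hmemT _ hy
    have hrN := hR r hr
    have hge : m ≤ N * m + r := le_trans (Nat.le_mul_of_pos_left m hN) (Nat.le_add_right _ _)
    have hmod : (N * m + r) % N = r := by
      rw [Nat.mul_add_mod]
      exact Nat.mod_eq_of_lt hrN
    have hdiv : (n + 1) / N ≥ M + 2 := by omega
    have hle : N * m + r ≤ n := by
      have h1 : m + 1 ≤ (n + 1) / N := by omega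
      have h2 : (m + 1) * N ≤ n + 1 := (Nat.le_div_iff_mul_le hN).1 h1
      have h3 : (m + 1) * N = N * m + N := by ring
      omega
    refine Finset.mem_filter.2 ⟨Finset.mem_Icc.2 ⟨by omega, hle⟩, ?_⟩
    exact h r hr _ hmod (by omega)
  have hcardT : R.card * ((n + 1) / N - (M + 1)) ≤ T.card := by
    rw [hT, Finset.card_biUnion]
    · have : ∀ r ∈ R, ((Finset.Icc (M + 1) ((n + 1) / N - 1)).image (fun m => N * m + r)).card
          = (n + 1) / N - (M + 1) := by
        intro r hr
        rw [Finset.card_image_of_injective _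
          (fun a b hab => Nat.eq_of_mul_eq_mul_left hN (by omega : N * a = N * b)),
          Nat.card_Icc]
        omega
      rw [Finset.sum_congr rfl this, Finset.sum_const, smul_eq_mul]
    · intro r hr r' hr' hne
      apply Finset.disjoint_left.2
      intro y hy hy'
      simp only [Finset.mem_image, Finset.mem_Icc] at hy hy'
      obtain ⟨m, _, rfl⟩ := hy
      obtain ⟨m', _, he⟩ := hy'
      have h1 : (N * m + r) % N = r := by
        rw [Nat.mul_add_mod]; exact Nat.mod_eq_of_lt (hR r hr)
      have h2 : (N * m' + r') % N = r' := by
        rw [Nat.mul_add_mod]; exact Nat.mod_eq_of_lt (hR r' hr')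
      rw [he] at h2
      exact hne (by omega)
  calc R.card * ((n + 1) / N - (M + 1)) ≤ T.card := hcardT
    _ ≤ _ := Finset.card_le_card hsub

lemma le_upperDensity_tails (X : Set ℕ) (N : ℕ) (hN : 0 < N) (R : Finset ℕ)
    (hR : ∀ r ∈ R, r < N) (M : ℕ)
    (h : ∀ r ∈ R, ∀ y, y % N = r → M ≤ y → y ∈ X) :
    (R.card : ℝ) / N ≤ upperDensity X := by
  rw [upperDensity_eq]
  apply le_limsup_of_eps (bddAbove_cnt X)
  intro ε hε
  obtain ⟨n₀, hn₀⟩ := exists_nat_gt ((R.card : ℝ) * (M + 2) / ε)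
  filter_upwards [Filter.eventually_ge_atTop (max n₀ 1)] with n hn
  have hn1 : 1 ≤ n := le_trans (le_max_right _ _) hn
  have hnR : (0:ℝ) < n := by exact_mod_cast hn1
  have hNR : (0:ℝ) < N := by exact_mod_cast hN
  have hc : (R.card : ℝ) * (((n + 1) / N - (M + 1) : ℕ) : ℝ) ≤ cntF X n := by
    exact_mod_cast cntF_tails_ge X N hN R hR M h n
  have hstep : (n : ℝ) / N - (M + 2) ≤ (((n + 1) / N - (M + 1) : ℕ) : ℝ) := by
    have h1 := cast_nat_sub_ge ((n + 1) / N) (M + 1)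
    have h2 := nat_div_cast_ge (n + 1) N hN
    have h3 : (n : ℝ) / N ≤ ((n : ℝ) + 1) / N := by
      gcongr
      · linarith
    push_cast at h1 h2 ⊢
    linarith
  have hcard0 : (0:ℝ) ≤ R.card := by positivity
  have hmain : (R.card : ℝ) * ((n : ℝ) / N - (M + 2)) ≤ cntF X n := by
    nlinarith
  have hεn : (R.card : ℝ) * (M + 2) ≤ ε * n := by
    have hn₀n : (n₀ : ℝ) ≤ n := by exact_mod_cast le_trans (le_max_left _ _) hn
    have : (R.card : ℝ) * (M + 2) / ε < n := lt_of_lt_of_le hn₀ hn₀n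
    rw [div_lt_iff₀ hε] at this
    nlinarith
  have expand : (R.card : ℝ) * ((n : ℝ) / N - (M + 2))
      = (R.card : ℝ) / N * n - R.card * (M + 2) := by
    field_simp
  have h4 : ((R.card : ℝ) / N - ε) * n ≤ cntF X n := by nlinarith
  rw [le_div_iff₀ hnR]
  exact h4
def covSet (X : Set ℕ) : Set ℝ := {d : ℝ | ∃ A : Set ℕ, IsAPUnion A ∧ X ⊆ A ∧ d = upperDensity A}

lemma buckUpper_def' (X : Set ℕ) : buckUpper X = sInf (covSet X) := rfl

lemma covSet_bddBelow (X : Set ℕ) : BddBelow (covSet X) := by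
  refine ⟨0, ?_⟩
  rintro d ⟨A, _, _, rfl⟩
  exact upperDensity_nonneg A

lemma covSet_nonempty (X : Set ℕ) : (covSet X).Nonempty := by
  refine ⟨upperDensity (APu {(1, 0)}), APu {(1, 0)}, isAPUnion_APu _ (by simp), ?_, rfl⟩
  intro y _
  simp only [APu, Finset.mem_singleton, Set.mem_iUnion, Set.mem_setOf_eq]
  exact ⟨(1, 0), rfl, y, by simp⟩

lemma buckUpper_le_cover (X : Set ℕ) (S : Finset (ℕ × ℕ)) (hS : ∀ p ∈ S, 1 ≤ p.1)
    (hsub : X ⊆ APu S) : buckUpper X ≤ ∑ p ∈ S, (1 : ℝ) / p.1 :=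
  le_trans (csInf_le (covSet_bddBelow X) ⟨APu S, isAPUnion_APu S hS, hsub, rfl⟩)
    (upperDensity_APu_le S hS)

lemma le_buckUpper_tails (X : Set ℕ) (N : ℕ) (hN : 0 < N) (R : Finset ℕ)
    (hR : ∀ r ∈ R, r < N) (M : ℕ)
    (h : ∀ r ∈ R, ∀ y, y % N = r → M ≤ y → y ∈ X) :
    (R.card : ℝ) / N ≤ buckUpper X := by
  apply le_csInf (covSet_nonempty X)
  rintro d ⟨V, hV, hXV, rfl⟩
  exact le_upperDensity_tails V N hN R hR M (fun r hr y hy hM => hXV (h r hr y hy hM))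

lemma one_le_buck_add (X : Set ℕ) : 1 ≤ buckUpper X + buckUpper Xᶜ := by
  classical
  have key : ∀ V W : Set ℕ, X ⊆ V → Xᶜ ⊆ W →
      1 ≤ upperDensity V + upperDensity W := by
    intro V W hXV hXW
    have hcov : ∀ n : ℕ, n ≤ cntF V n + cntF W n := by
      intro n
      have hsub : (Finset.Icc 1 n) ⊆
          ((Finset.Icc 1 n).filter (fun y => y ∈ V)) ∪ ((Finset.Icc 1 n).filter (fun y => y ∈ W)) := by
        intro y hy
        by_cases hyX : y ∈ X
        · exact Finset.mem_union_left _ (Finset.mem_filter.2 ⟨hy, hXV hyX⟩)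
        · exact Finset.mem_union_right _ (Finset.mem_filter.2 ⟨hy, hXW hyX⟩)
      calc n = (Finset.Icc 1 n).card := by rw [Nat.card_Icc]; omega
        _ ≤ _ := Finset.card_le_card hsub
        _ ≤ cntF V n + cntF W n := by
            unfold cntF
            exact Finset.card_union_le _ _
    have hgoal : 1 - upperDensity W ≤ upperDensity V := by
      rw [upperDensity_eq V]
      apply le_limsup_of_eps (bddAbove_cnt V)
      intro ε hε
      have hlt : limsup (fun n : ℕ => (cntF W n : ℝ) / n) atTop < upperDensity W + ε := by
        rw [← upperDensity_eq]; linarith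
      have hev := Filter.eventually_lt_of_limsup_lt hlt (bddAbove_cnt W)
      filter_upwards [hev, Filter.eventually_ge_atTop 1] with n h1n h2n
      have hnR : (0:ℝ) < n := by exact_mod_cast h2n
      have hc : (n : ℝ) ≤ (cntF V n : ℝ) + cntF W n := by exact_mod_cast hcov n
      have h1 : 1 ≤ (cntF V n : ℝ) / n + (cntF W n : ℝ) / n := by
        rw [← add_div, le_div_iff₀ hnR]
        linarith
      have h2 : (cntF W n : ℝ) / n < upperDensity W + ε := h1n
      linarith
    linarith
  have h1 : 1 - buckUpper Xᶜ ≤ buckUpper X := by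
    apply le_csInf (covSet_nonempty X)
    rintro d ⟨V, hV, hXV, rfl⟩
    have h2 : 1 - upperDensity V ≤ buckUpper Xᶜ := by
      apply le_csInf (covSet_nonempty Xᶜ)
      rintro e ⟨W, hW, hXW, rfl⟩
      linarith [key V W hXV hXW]
    linarith
  linarith

lemma buckLower_le_buckUpper (X : Set ℕ) : buckLower X ≤ buckUpper X := by
  unfold buckLower
  linarith [one_le_buck_add X]

lemma le_of_forall_eps {a b : ℝ} (h : ∀ ε : ℝ, 0 < ε → a ≤ b + ε) : a ≤ b := by
  by_contra hlt
  push_neg at hlt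
  have := h ((a - b) / 2) (by linarith)
  linarith

/-- cover by residue classes mod N -/
lemma buckUpper_le_classes (X : Set ℕ) (N : ℕ) (hN : 0 < N) (Rout : Finset ℕ)
    (hcov : ∀ y ∈ X, y % N ∈ Rout) : buckUpper X ≤ (Rout.card : ℝ) / N := by
  classical
  have hsub : X ⊆ APu (Rout.image (fun r => (N, r))) := by
    intro y hy
    simp only [APu, Set.mem_iUnion, Finset.mem_image, Set.mem_setOf_eq]
    exact ⟨(N, y % N), ⟨y % N, hcov y hy, rfl⟩, y / N, (Nat.div_add_mod y N).symm⟩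
  have hS : ∀ p ∈ Rout.image (fun r => (N, r)), 1 ≤ p.1 := by
    intro p hp
    simp only [Finset.mem_image] at hp
    obtain ⟨r, _, rfl⟩ := hp
    exact hN
  refine le_trans (buckUpper_le_cover X _ hS hsub) ?_
  rw [Finset.sum_image (by intro a _ b _ hab; simpa using hab)]
  simp [mul_one_div, div_eq_mul_inv]

/-- cover by residue classes mod N plus an initial segment -/
lemma buckUpper_le_classes_plus (X : Set ℕ) (N : ℕ) (hN : 0 < N) (Rout : Finset ℕ) (M : ℕ)
    (hcov : ∀ y ∈ X, M ≤ y → y % N ∈ Rout) : buckUpper X ≤ (Rout.card : ℝ) / N := by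
  classical
  apply le_of_forall_eps
  intro ε hε
  obtain ⟨K, hK⟩ := exists_nat_gt (max ((M : ℝ) / ε) N)
  have hKN : (N : ℝ) < K := lt_of_le_of_lt (le_max_right _ _) hK
  have hKN' : N < K := by exact_mod_cast hKN
  have hK0 : 0 < K := lt_of_le_of_lt (Nat.zero_le N) hKN'
  have hKR : (0:ℝ) < K := by exact_mod_cast hK0
  set S : Finset (ℕ × ℕ) :=
    Rout.image (fun r => (N, r)) ∪ (Finset.range M).image (fun j => (K, j)) with hSdef
  have hS : ∀ p ∈ S, 1 ≤ p.1 := by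
    intro p hp
    rw [hSdef, Finset.mem_union] at hp
    rcases hp with hp | hp <;> simp only [Finset.mem_image] at hp <;>
      obtain ⟨r, _, rfl⟩ := hp
    · exact hN
    · exact hK0
  have hsub : X ⊆ APu S := by
    intro y hy
    simp only [APu, Set.mem_iUnion, Set.mem_setOf_eq]
    by_cases hyM : M ≤ y
    · refine ⟨(N, y % N), ?_, y / N, (Nat.div_add_mod y N).symm⟩
      rw [hSdef, Finset.mem_union]
      exact Or.inl (Finset.mem_image.2 ⟨y % N, hcov y hy hyM, rfl⟩)
    · refine ⟨(K, y), ?_, 0, by simp⟩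
      rw [hSdef, Finset.mem_union]
      exact Or.inr (Finset.mem_image.2 ⟨y, Finset.mem_range.2 (by omega), rfl⟩)
  refine le_trans (buckUpper_le_cover X S hS hsub) ?_
  have hdisj : Disjoint (Rout.image (fun r => (N, r)))
      ((Finset.range M).image (fun j => (K, j))) := by
    rw [Finset.disjoint_left]
    intro p hp hp'
    simp only [Finset.mem_image] at hp hp'
    obtain ⟨r, _, rfl⟩ := hp
    obtain ⟨j, _, hj⟩ := hp'
    have : K = N := congrArg Prod.fst hj
    omega
  rw [hSdef, Finset.sum_union hdisj]
  rw [Finset.sum_image (by intro a _ b _ hab; simpa using hab),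
    Finset.sum_image (by intro a _ b _ hab; simpa using hab)]
  simp only [Finset.sum_const, nsmul_eq_mul, Finset.card_range, mul_one_div]
  have hMK : (M : ℝ) / K ≤ ε := by
    have h1 : (M : ℝ) / ε < K := lt_of_le_of_lt (le_max_left _ _) hK
    rw [div_lt_iff₀ hε] at h1
    rw [div_le_iff₀ hKR]
    nlinarith
  linarith
lemma ge_of_forall_eps {a b : ℝ} (h : ∀ ε : ℝ, 0 < ε → a - ε ≤ b) : a ≤ b := by
  by_contra hlt
  push_neg at hlt
  have := h ((a - b) / 2) (by linarith)
  linarith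

lemma sdiff_card_cast (N : ℕ) (R : Finset ℕ) (hR : ∀ r ∈ R, r < N) :
    (((Finset.range N) \ R).card : ℝ) = N - R.card := by
  have hsub : R ⊆ Finset.range N := fun r hr => Finset.mem_range.2 (hR r hr)
  rw [Finset.card_sdiff_of_subset hsub]
  have := Finset.card_le_card hsub
  rw [Finset.card_range] at *
  push_cast [Nat.cast_sub this]
  ring

lemma compl_tails (X : Set ℕ) (N : ℕ) (Rout : Finset ℕ)
    (hcov : ∀ y ∈ X, y % N ∈ Rout) :
    ∀ r ∈ (Finset.range N) \ Rout, ∀ y, y % N = r → 0 ≤ y → y ∈ Xᶜ := by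
  intro r hr y hy _
  rw [Finset.mem_sdiff] at hr
  intro hyX
  exact hr.2 (hy ▸ hcov y hyX)

lemma compl_cover (X : Set ℕ) (N : ℕ) (hN : 0 < N) (Rin : Finset ℕ) (M : ℕ)
    (htail : ∀ r ∈ Rin, ∀ y, y % N = r → M ≤ y → y ∈ X) :
    ∀ y ∈ Xᶜ, M ≤ y → y % N ∈ (Finset.range N) \ Rin := by
  intro y hy hM
  rw [Finset.mem_sdiff, Finset.mem_range]
  refine ⟨Nat.mod_lt y hN, fun hmem => hy (htail _ hmem y rfl hM)⟩

/-- Main sandwich lemma, value version. -/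
lemma buck_eq_val (X : Set ℕ) (α : ℝ)
    (h : ∀ ε : ℝ, 0 < ε → ∃ (N : ℕ) (Rin Rout : Finset ℕ) (M : ℕ),
      0 < N ∧ (∀ r ∈ Rin, r < N) ∧ (∀ r ∈ Rout, r < N) ∧
      (∀ r ∈ Rin, ∀ y, y % N = r → M ≤ y → y ∈ X) ∧
      (∀ y ∈ X, y % N ∈ Rout) ∧
      α - ε ≤ (Rin.card : ℝ) / N ∧ (Rout.card : ℝ) / N ≤ α + ε) :
    buckUpper X = α ∧ buckLower X = α := by
  have hup_le : buckUpper X ≤ α := by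
    apply le_of_forall_eps
    intro ε hε
    obtain ⟨N, Rin, Rout, M, hN, hin, hout, htail, hcov, hlo, hhi⟩ := h ε hε
    exact le_trans (buckUpper_le_classes X N hN Rout hcov) hhi
  have hup_ge : α ≤ buckUpper X := by
    apply ge_of_forall_eps
    intro ε hε
    obtain ⟨N, Rin, Rout, M, hN, hin, hout, htail, hcov, hlo, hhi⟩ := h ε hε
    exact le_trans hlo (le_buckUpper_tails X N hN Rin hin M htail)
  have hco_le : buckUpper Xᶜ ≤ 1 - α := by
    apply le_of_forall_eps
    intro ε hε
    obtain ⟨N, Rin, Rout, M, hN, hin, hout, htail, hcov, hlo, hhi⟩ := h ε hε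
    have hNR : (0:ℝ) < N := by exact_mod_cast hN
    have h1 := buckUpper_le_classes_plus Xᶜ N hN ((Finset.range N) \ Rin) M
      (compl_cover X N hN Rin M htail)
    rw [sdiff_card_cast N Rin hin] at h1
    have h2 : ((N : ℝ) - Rin.card) / N = 1 - (Rin.card : ℝ) / N := by
      field_simp
    rw [h2] at h1
    linarith
  have hco_ge : 1 - α ≤ buckUpper Xᶜ := by
    apply ge_of_forall_eps
    intro ε hε
    obtain ⟨N, Rin, Rout, M, hN, hin, hout, htail, hcov, hlo, hhi⟩ := h ε hε
    have hNR : (0:ℝ) < N := by exact_mod_cast hN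
    have h1 := le_buckUpper_tails Xᶜ N hN ((Finset.range N) \ Rout)
      (fun r hr => Finset.mem_range.1 (Finset.mem_sdiff.1 hr).1) 0
      (compl_tails X N Rout hcov)
    rw [sdiff_card_cast N Rout hout] at h1
    have h2 : ((N : ℝ) - Rout.card) / N = 1 - (Rout.card : ℝ) / N := by
      field_simp
    rw [h2] at h1
    linarith
  constructor
  · exact le_antisymm hup_le hup_ge
  · unfold buckLower
    have : buckUpper Xᶜ = 1 - α := le_antisymm hco_le hco_ge
    rw [this]; ring

/-- Main sandwich lemma, equality version. -/
lemma buck_eq_self (X : Set ℕ)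
    (h : ∀ ε : ℝ, 0 < ε → ∃ (N : ℕ) (Rin Rout : Finset ℕ) (M : ℕ),
      0 < N ∧ (∀ r ∈ Rin, r < N) ∧ (∀ r ∈ Rout, r < N) ∧
      (∀ r ∈ Rin, ∀ y, y % N = r → M ≤ y → y ∈ X) ∧
      (∀ y ∈ X, y % N ∈ Rout) ∧
      (Rout.card : ℝ) / N ≤ (Rin.card : ℝ) / N + ε) :
    buckUpper X = buckLower X := by
  refine le_antisymm ?_ (buckLower_le_buckUpper X)
  apply le_of_forall_eps
  intro ε hε
  obtain ⟨N, Rin, Rout, M, hN, hin, hout, htail, hcov, hcard⟩ := h ε hε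
  have hNR : (0:ℝ) < N := by exact_mod_cast hN
  have h1 : buckUpper X ≤ (Rout.card : ℝ) / N := buckUpper_le_classes X N hN Rout hcov
  have h2 := buckUpper_le_classes_plus Xᶜ N hN ((Finset.range N) \ Rin) M
    (compl_cover X N hN Rin M htail)
  rw [sdiff_card_cast N Rin hin] at h2
  have h3 : ((N : ℝ) - Rin.card) / N = 1 - (Rin.card : ℝ) / N := by field_simp
  rw [h3] at h2
  unfold buckLower
  linarith
open Classical in
/-- residues of B modulo Q -/
noncomputable def Rres (B : Set ℕ) (Q : ℕ) : Finset ℕ :=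
  (Finset.range Q).filter (fun r => ∃ b ∈ B, b % Q = r)

lemma mem_Rres {B : Set ℕ} {Q r : ℕ} : r ∈ Rres B Q ↔ r < Q ∧ ∃ b ∈ B, b % Q = r := by
  classical
  simp [Rres]

lemma mod_mem_Rres {B : Set ℕ} {Q : ℕ} (hQ : 0 < Q) {b : ℕ} (hb : b ∈ B) :
    b % Q ∈ Rres B Q :=
  mem_Rres.2 ⟨Nat.mod_lt b hQ, b, hb, rfl⟩

/-- key consequence of Buck-null: arbitrarily fine residue covers along any modulus -/
lemma refine_exists (B : Set ℕ) (hB0 : buckUpper B = 0) (Q₀ : ℕ) (hQ₀ : 0 < Q₀)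
    (ε : ℝ) (hε : 0 < ε) :
    ∃ Q : ℕ, Q₀ ∣ Q ∧ Q₀ < Q ∧ ((Rres B Q).card : ℝ) / Q ≤ ε := by
  classical
  have hlt : sInf (covSet B) < ε := by rw [← buckUpper_def', hB0]; exact hε
  obtain ⟨d, hd, hdε⟩ := exists_lt_of_csInf_lt (covSet_nonempty B) hlt
  obtain ⟨V, ⟨S, hS, rfl⟩, hBV, rfl⟩ := hd
  set L : ℕ := ∏ p ∈ S, p.1 with hL
  have hL1 : 1 ≤ L := Finset.one_le_prod' (fun p hp => hS p hp)
  refine ⟨Q₀ * L * 2, ⟨L * 2, by ring⟩, by nlinarith, ?_⟩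
  set Q : ℕ := Q₀ * L * 2 with hQdef
  have hQpos : 0 < Q := by positivity
  have hdvd : ∀ p ∈ S, p.1 ∣ Q := by
    intro p hp
    have h1 : p.1 ∣ L := Finset.dvd_prod_of_mem _ hp
    have h2 : p.1 ∣ Q₀ * (L * 2) := Dvd.dvd.mul_left (Dvd.dvd.mul_right h1 2) Q₀
    have h3 : Q = Q₀ * (L * 2) := by rw [hQdef]; ring
    rw [h3]
    exact h2
  set RV : Finset ℕ := (Finset.range Q).filter
    (fun r => ∃ p ∈ S, r % p.1 = p.2 % p.1) with hRV
  set M : ℕ := S.sup Prod.snd with hM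
  have htails : ∀ r ∈ RV, ∀ y, y % Q = r → M ≤ y →
      y ∈ ⋃ p ∈ S, {n : ℕ | ∃ m : ℕ, n = p.1 * m + p.2} := by
    intro r hr y hy hMy
    rw [hRV, Finset.mem_filter] at hr
    obtain ⟨hrQ, p, hp, hrp⟩ := hr
    have hp1 : 0 < p.1 := hS p hp
    have h1 : y % p.1 = p.2 % p.1 := by
      rw [← Nat.mod_mod_of_dvd y (hdvd p hp), hy, hrp]
    have h2 : p.2 ≤ y := le_trans (Finset.le_sup hp) hMy
    have h3 : p.1 ∣ y - p.2 := (Nat.modEq_iff_dvd' h2).1 (Nat.ModEq.symm h1)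
    obtain ⟨m, hm⟩ := h3
    refine Set.mem_iUnion.2 ⟨p, Set.mem_iUnion.2 ⟨hp, ⟨m, by omega⟩⟩⟩
  have hRsub : Rres B Q ⊆ RV := by
    intro r hr
    obtain ⟨hrQ, b, hb, rfl⟩ := mem_Rres.1 hr
    have := hBV hb
    rw [Set.mem_iUnion] at this
    obtain ⟨p, hp⟩ := this
    rw [Set.mem_iUnion] at hp
    obtain ⟨hpS, m, hbm⟩ := hp
    rw [hRV, Finset.mem_filter]
    refine ⟨Finset.mem_range.2 hrQ, p, hpS, ?_⟩
    rw [Nat.mod_mod_of_dvd b (hdvd p hpS), hbm]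
    simp [Nat.mul_add_mod, Nat.add_mul_mod_self_left]
  have hRVle : ((RV.card : ℝ)) / Q ≤ upperDensity (⋃ p ∈ S, {n : ℕ | ∃ m : ℕ, n = p.1 * m + p.2}) := by
    apply le_upperDensity_tails _ Q hQpos RV
      (fun r hr => Finset.mem_range.1 (Finset.mem_filter.1 hr).1) M htails
  have hcard : ((Rres B Q).card : ℝ) ≤ RV.card := by
    exact_mod_cast Finset.card_le_card hRsub
  have hQR : (0:ℝ) < Q := by exact_mod_cast hQpos
  have h5 : ((Rres B Q).card : ℝ) / Q ≤ (RV.card : ℝ) / Q := by gcongr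
  linarith
open Classical in
/-- residues occupied by `D + B` where `D` is the union of classes with offsets `offs` mod `Q` -/
noncomputable def Ufin (B : Set ℕ) (Q : ℕ) (offs : Finset ℕ) : Finset ℕ :=
  (Finset.range Q).filter (fun ω => ∃ r ∈ offs, ∃ b ∈ B, (r + b) % Q = ω)

/-- residues occupied by `CL(Q,c) + B` -/
noncomputable def blob (B : Set ℕ) (Q c : ℕ) : Finset ℕ :=
  (Rres B Q).image (fun β => (c + β) % Q)

lemma mem_Ufin {B : Set ℕ} {Q : ℕ} {offs : Finset ℕ} {ω : ℕ} :
    ω ∈ Ufin B Q offs ↔ ω < Q ∧ ∃ r ∈ offs, ∃ b ∈ B, (r + b) % Q = ω := by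
  classical
  simp [Ufin]

lemma mem_blob {B : Set ℕ} {Q : ℕ} (hQ : 0 < Q) {c ω : ℕ} :
    ω ∈ blob B Q c ↔ ∃ b ∈ B, (c + b) % Q = ω := by
  classical
  constructor
  · intro h
    obtain ⟨β, hβ, rfl⟩ := Finset.mem_image.1 h
    obtain ⟨_, b, hb, rfl⟩ := mem_Rres.1 hβ
    exact ⟨b, hb, (Nat.add_mod_mod c b Q).symm⟩
  · rintro ⟨b, hb, rfl⟩
    exact Finset.mem_image.2 ⟨b % Q, mod_mem_Rres hQ hb, Nat.add_mod_mod c b Q⟩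

lemma blob_card_le (B : Set ℕ) (Q c : ℕ) : (blob B Q c).card ≤ (Rres B Q).card :=
  Finset.card_image_le

lemma blob_lt {B : Set ℕ} {Q : ℕ} (hQ : 0 < Q) {c ω : ℕ} (h : ω ∈ blob B Q c) : ω < Q := by
  obtain ⟨b, _, rfl⟩ := (mem_blob hQ).1 h
  exact Nat.mod_lt _ hQ

lemma Ufin_insert {B : Set ℕ} {Q : ℕ} (hQ : 0 < Q) (offs : Finset ℕ) (c : ℕ) :
    Ufin B Q (insert c offs) = Ufin B Q offs ∪ blob B Q c := by
  classical
  ext ω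
  simp only [mem_Ufin, Finset.mem_union, mem_blob hQ, Finset.mem_insert]
  constructor
  · rintro ⟨hω, r, (rfl | hr), b, hb, hrb⟩
    · exact Or.inr ⟨b, hb, hrb⟩
    · exact Or.inl ⟨hω, r, hr, b, hb, hrb⟩
  · rintro (⟨hω, r, hr, b, hb, hrb⟩ | ⟨b, hb, hrb⟩)
    · exact ⟨hω, r, Or.inr hr, b, hb, hrb⟩
    · exact ⟨hrb ▸ Nat.mod_lt _ hQ, c, Or.inl rfl, b, hb, hrb⟩

/-- solving `c + b ≡ ψ  (mod Q)` for `c` -/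
lemma solve_c (Q : ℕ) (hQ : 0 < Q) (ψ b : ℕ) :
    ∃ c, c < Q ∧ (c + b) % Q = ψ % Q := by
  refine ⟨(ψ + Q - b % Q) % Q, Nat.mod_lt _ hQ, ?_⟩
  rw [Nat.mod_add_mod]
  have h1 : b % Q < Q := Nat.mod_lt _ hQ
  have h3 : b = Q * (b / Q) + b % Q := (Nat.div_add_mod b Q).symm
  have h4 : ψ + Q - b % Q + b = ψ + Q * (b / Q + 1) := by
    have h5 : Q * (b / Q + 1) = Q * (b / Q) + Q := by ring
    omega
  rw [h4, Nat.add_mul_mod_self_left]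

lemma cancel_mod {Qp a b c : ℕ} (h : (a + c) % Qp = (b + c) % Qp) : a % Qp = b % Qp :=
  Nat.ModEq.add_right_cancel' c h

/-- the eat loop: grow `offs` inside the reservoir until the invariant can be handed over -/
lemma eat_loop (B : Set ℕ) (α : ℝ) (Q Qp xp : ℕ) (hQ : 0 < Q)
    (hQp : 0 < Qp) (hdvd : Qp ∣ Q) (hxp : xp < Qp) :
    ∀ fuel : ℕ, ∀ offs Prem : Finset ℕ,
      Prem.card ≤ fuel →
      (∀ r ∈ offs, r < Q) →
      (∀ ψ ∈ Prem, ψ < Q ∧ ψ ∉ Ufin B Q offs ∧ ∃ b ∈ B, ψ % Qp = (xp + b) % Qp) →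
      ((Ufin B Q offs).card : ℝ) / Q ≤ α →
      α ≤ ((Ufin B Q offs).card : ℝ) / Q + (Prem.card : ℝ) / Q →
      ∃ offs' : Finset ℕ, ∃ x' : ℕ,
        offs ⊆ offs' ∧ (∀ r ∈ offs', r < Q) ∧
        (∀ r ∈ offs', r ∉ offs → r % Qp = xp) ∧
        x' < Q ∧ x' % Qp = xp ∧
        ((Ufin B Q offs').card : ℝ) / Q ≤ α ∧
        α ≤ ((Ufin B Q offs').card : ℝ) / Q
          + (((blob B Q x' \ Ufin B Q offs').card : ℝ)) / Q := by
  classical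
  have hQR : (0:ℝ) < Q := by exact_mod_cast hQ
  have hxpQ : xp < Q := lt_of_lt_of_le hxp (Nat.le_of_dvd hQ hdvd)
  intro fuel
  induction fuel with
  | zero =>
    intro offs Prem hcard hoffs hPrem hM1 hM2
    have hPe : Prem.card = 0 := Nat.le_zero.1 hcard
    refine ⟨offs, xp, Finset.Subset.refl _, hoffs, fun r hr hr' => absurd hr hr', hxpQ,
      Nat.mod_eq_of_lt hxp, hM1, ?_⟩
    have h0 : (Prem.card : ℝ) / Q = 0 := by
      rw [show ((Prem.card : ℝ)) = 0 by exact_mod_cast hPe]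
      simp
    have hpos : (0:ℝ) ≤ (((blob B Q xp \ Ufin B Q offs).card : ℝ)) / Q := by positivity
    linarith
  | succ n ih =>
    intro offs Prem hcard hoffs hPrem hM1 hM2
    by_cases hstop : ∃ x', (x' < Q ∧ x' % Qp = xp) ∧
        α ≤ ((Ufin B Q offs).card : ℝ) / Q
          + (((blob B Q x' \ Ufin B Q offs).card : ℝ)) / Q
    · obtain ⟨x', ⟨hx'Q, hx'p⟩, hx'⟩ := hstop
      exact ⟨offs, x', Finset.Subset.refl _, hoffs, fun r hr hr' => absurd hr hr', hx'Q, hx'p,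
        hM1, hx'⟩
    · push_neg at hstop
      have hlt : ((Ufin B Q offs).card : ℝ) / Q < α := by
        have h6 := hstop xp ⟨hxpQ, Nat.mod_eq_of_lt hxp⟩
        have hpos : (0:ℝ) ≤ (((blob B Q xp \ Ufin B Q offs).card : ℝ)) / Q := by positivity
        linarith
      have hPne : Prem.Nonempty := by
        rcases Finset.eq_empty_or_nonempty Prem with rfl | h
        · simp only [Finset.card_empty, Nat.cast_zero, zero_div, add_zero] at hM2
          linarith
        · exact h
      obtain ⟨ψ, hψ⟩ := hPne
      obtain ⟨hψQ, hψU, b, hb, hψcap⟩ := hPrem ψ hψ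
      obtain ⟨c, hcQ, hcb⟩ := solve_c Q hQ ψ b
      rw [Nat.mod_eq_of_lt hψQ] at hcb
      have hcslot : c % Qp = xp := by
        have h1 : (c + b) % Qp = ψ % Qp := by
          rw [← Nat.mod_mod_of_dvd (c + b) hdvd, hcb]
        rw [hψcap] at h1
        have h2 : c % Qp = xp % Qp := cancel_mod h1
        rw [h2, Nat.mod_eq_of_lt hxp]
      have hψblob : ψ ∈ blob B Q c := (mem_blob hQ).2 ⟨b, hb, hcb⟩
      set offs2 := insert c offs with hoffs2
      set Prem2 := Prem \ blob B Q c with hPrem2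
      have hU2 : Ufin B Q offs2 = Ufin B Q offs ∪ blob B Q c := Ufin_insert hQ offs c
      have hUsub : Ufin B Q offs ⊆ Ufin B Q offs2 := by
        rw [hU2]; exact Finset.subset_union_left
      have hcardU2 : (Ufin B Q offs2).card
          = (Ufin B Q offs).card + (blob B Q c \ Ufin B Q offs).card := by
        rw [hU2, ← Finset.union_sdiff_self_eq_union,
          Finset.card_union_of_disjoint Finset.disjoint_sdiff]
      have hstopc := hstop c ⟨hcQ, hcslot⟩
      have hM1' : ((Ufin B Q offs2).card : ℝ) / Q ≤ α := by
        rw [hcardU2]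
        push_cast
        rw [add_div]
        linarith
      have hP2ss : Prem2 ⊂ Prem := by
        rw [hPrem2]
        exact (Finset.ssubset_iff_of_subset Finset.sdiff_subset).2
          ⟨ψ, hψ, by simp [hψblob]⟩
      have hcard2 : Prem2.card ≤ n := by
        have h8 := Finset.card_lt_card hP2ss
        omega
      have hPrem' : ∀ ψ' ∈ Prem2, ψ' < Q ∧ ψ' ∉ Ufin B Q offs2 ∧
          ∃ b ∈ B, ψ' % Qp = (xp + b) % Qp := by
        intro ψ' hψ'
        rw [hPrem2, Finset.mem_sdiff] at hψ'
        obtain ⟨h1, h2⟩ := hψ'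
        obtain ⟨ha, hbU, hc⟩ := hPrem ψ' h1
        refine ⟨ha, ?_, hc⟩
        rw [hU2, Finset.mem_union]
        rintro (h | h)
        · exact hbU h
        · exact h2 h
      have hinter : (Prem ∩ blob B Q c).card ≤ (blob B Q c \ Ufin B Q offs).card := by
        apply Finset.card_le_card
        intro y hy
        rw [Finset.mem_inter] at hy
        rw [Finset.mem_sdiff]
        exact ⟨hy.2, (hPrem y hy.1).2.1⟩
      have hsplit : Prem2.card + (Prem ∩ blob B Q c).card = Prem.card := by
        rw [hPrem2]
        exact Finset.card_sdiff_add_card_inter _ _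
      have hM2' : α ≤ ((Ufin B Q offs2).card : ℝ) / Q + (Prem2.card : ℝ) / Q := by
        have e1 : ((Prem ∩ blob B Q c).card : ℝ) ≤ ((blob B Q c \ Ufin B Q offs).card : ℝ) := by
          exact_mod_cast hinter
        have e2 : (Prem2.card : ℝ) + ((Prem ∩ blob B Q c).card : ℝ) = Prem.card := by
          exact_mod_cast hsplit
        have h7 : ((Ufin B Q offs).card : ℝ) + Prem.card
            ≤ ((Ufin B Q offs2).card : ℝ) + Prem2.card := by
          rw [hcardU2]
          push_cast
          linarith
        calc α ≤ ((Ufin B Q offs).card : ℝ) / Q + (Prem.card : ℝ) / Q := hM2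
          _ = (((Ufin B Q offs).card : ℝ) + Prem.card) / Q := by rw [← add_div]
          _ ≤ (((Ufin B Q offs2).card : ℝ) + Prem2.card) / Q := by gcongr
          _ = _ := by rw [← add_div]
      obtain ⟨offs', x', hsub', hlt', hnew', hx'Q, hx'p, hm1', hm2'⟩ :=
        ih offs2 Prem2 hcard2
          (fun r hr => by
            rcases Finset.mem_insert.1 hr with rfl | hr2
            · exact hcQ
            · exact hoffs r hr2)
          hPrem' hM1' hM2'
      refine ⟨offs', x', ?_, hlt', ?_, hx'Q, hx'p, hm1', hm2'⟩
      · exact le_trans (Finset.subset_insert c offs) hsub'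
      · intro r hr hrno
        by_cases hr2 : r ∈ offs2
        · rcases Finset.mem_insert.1 hr2 with rfl | h
          · exact hcslot
          · exact absurd h hrno
        · exact hnew' r hr hr2
open Classical in
/-- lift of a residue set to a finer modulus -/
noncomputable def liftF (Q Q' : ℕ) (S : Finset ℕ) : Finset ℕ :=
  (Finset.range Q').filter (fun r => r % Q ∈ S)

lemma mem_liftF {Q Q' : ℕ} {S : Finset ℕ} {r : ℕ} :
    r ∈ liftF Q Q' S ↔ r < Q' ∧ r % Q ∈ S := by
  classical
  simp [liftF]

lemma liftF_card (Q Q' : ℕ) (hQ : 0 < Q) (hdvd : Q ∣ Q') (S : Finset ℕ)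
    (hS : ∀ r ∈ S, r < Q) : (liftF Q Q' S).card = S.card * (Q' / Q) := by
  classical
  have hcp : S.card * (Q' / Q) = (S ×ˢ Finset.range (Q' / Q)).card := by
    rw [Finset.card_product, Finset.card_range]
  rw [hcp]
  apply Finset.card_bij' (fun r _ => (r % Q, r / Q))
    (fun p _ => p.1 + Q * p.2)
  · intro r hr
    obtain ⟨hrQ', hrS⟩ := mem_liftF.1 hr
    refine Finset.mem_product.2 ⟨hrS, Finset.mem_range.2 ?_⟩
    rw [Nat.div_lt_iff_lt_mul hQ]
    rw [Nat.div_mul_cancel hdvd]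
    exact hrQ'
  · intro p hp
    obtain ⟨hp1, hp2⟩ := Finset.mem_product.1 hp
    rw [Finset.mem_range] at hp2
    have hp1Q : p.1 < Q := hS _ hp1
    refine mem_liftF.2 ⟨?_, ?_⟩
    · calc p.1 + Q * p.2 < Q * (p.2 + 1) := by
            have he : Q * (p.2 + 1) = Q * p.2 + Q := by ring
            omega
        _ ≤ Q * (Q' / Q) := by
            apply Nat.mul_le_mul_left
            omega
        _ = Q' := Nat.mul_div_cancel' hdvd
    · rw [Nat.add_mul_mod_self_left, Nat.mod_eq_of_lt hp1Q]
      exact hp1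
  · intro r hr
    exact Nat.mod_add_div r Q
  · intro p hp
    obtain ⟨hp1, hp2⟩ := Finset.mem_product.1 hp
    have hp1Q : p.1 < Q := hS _ hp1
    ext
    · simp only
      rw [Nat.add_mul_mod_self_left, Nat.mod_eq_of_lt hp1Q]
    · simp only
      rw [Nat.add_mul_div_left _ _ hQ, Nat.div_eq_of_lt hp1Q, zero_add]

lemma lift_card_div (Q Q' : ℕ) (hQ : 0 < Q) (hQ' : 0 < Q') (hdvd : Q ∣ Q') (S : Finset ℕ)
    (hS : ∀ r ∈ S, r < Q) : ((liftF Q Q' S).card : ℝ) / Q' = (S.card : ℝ) / Q := by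
  rw [liftF_card Q Q' hQ hdvd S hS]
  have ht : 0 < Q' / Q := Nat.div_pos (Nat.le_of_dvd hQ' hdvd) hQ
  have htR : ((Q' / Q : ℕ) : ℝ) ≠ 0 := by
    simp only [ne_eq, Nat.cast_eq_zero]
    omega
  have hQQ : (Q' : ℝ) = (Q : ℝ) * ((Q' / Q : ℕ) : ℝ) := by
    exact_mod_cast (Nat.mul_div_cancel' hdvd).symm
  have hQ0 : (Q:ℝ) ≠ 0 := by
    have := hQ
    positivity
  rw [hQQ]
  field_simp
  push_cast
  ring

lemma Ufin_lift (B : Set ℕ) (Q Q' : ℕ) (hQ : 0 < Q) (hQ' : 0 < Q') (hdvd : Q ∣ Q')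
    (offs : Finset ℕ) (hoffs : ∀ r ∈ offs, r < Q) :
    Ufin B Q' (liftF Q Q' offs) = liftF Q Q' (Ufin B Q offs) := by
  ext ω
  rw [mem_Ufin, mem_liftF, mem_Ufin]
  constructor
  · rintro ⟨hω, r, hr, b, hb, rfl⟩
    obtain ⟨hrQ', hrS⟩ := mem_liftF.1 hr
    refine ⟨hω, Nat.mod_lt _ hQ, r % Q, hrS, b, hb, ?_⟩
    rw [Nat.mod_add_mod, Nat.mod_mod_of_dvd _ hdvd]
  · rintro ⟨hω, _, r₀, hr₀, b, hb, hrb⟩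
    obtain ⟨r, hrQ', hrbQ'⟩ := solve_c Q' hQ' ω b
    rw [Nat.mod_eq_of_lt hω] at hrbQ'
    have hrmod : r % Q = r₀ := by
      have h1 : (r + b) % Q = ω % Q := by
        rw [← Nat.mod_mod_of_dvd (r + b) hdvd, hrbQ']
      rw [← hrb] at h1
      have h2 : r % Q = r₀ % Q := cancel_mod h1
      rw [h2, Nat.mod_eq_of_lt (hoffs _ hr₀)]
    exact ⟨hω, r, mem_liftF.2 ⟨hrQ', hrmod ▸ hr₀⟩, b, hb, hrbQ'⟩

structure StState where
  Q : ℕ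
  offs : Finset ℕ
  x : ℕ
  hQ : 0 < Q
  hoffs : ∀ r ∈ offs, r < Q
  hx : x < Q

noncomputable def Pfin (B : Set ℕ) (st : StState) : Finset ℕ :=
  blob B st.Q st.x \ Ufin B st.Q st.offs

def Inv (B : Set ℕ) (α : ℝ) (st : StState) : Prop :=
  ((Ufin B st.Q st.offs).card : ℝ) / st.Q ≤ α ∧
  α ≤ ((Ufin B st.Q st.offs).card : ℝ) / st.Q + ((Pfin B st).card : ℝ) / st.Q

lemma Pfin_lt (B : Set ℕ) (st : StState) : ∀ ω ∈ Pfin B st, ω < st.Q := by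
  intro ω hω
  exact blob_lt st.hQ (Finset.mem_sdiff.1 hω).1

lemma step_exists (B : Set ℕ) (hB0 : buckUpper B = 0) (α : ℝ)
    (st : StState) (hInv : Inv B α st) (ε : ℝ) (hε : 0 < ε) :
    ∃ st' : StState, Inv B α st' ∧ st.Q ∣ st'.Q ∧ st.Q < st'.Q ∧
      ((Rres B st'.Q).card : ℝ) / st'.Q ≤ ε ∧
      (∀ r ∈ st'.offs, r % st.Q ∈ st.offs ∨ r % st.Q = st.x) ∧
      (∀ s, s < st'.Q → s % st.Q ∈ st.offs → s ∈ st'.offs) ∧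
      st'.x % st.Q = st.x := by
  classical
  obtain ⟨Q', hdvd, hQlt, hη⟩ := refine_exists B hB0 st.Q st.hQ ε hε
  have hQ' : 0 < Q' := lt_trans st.hQ hQlt
  set offs0 := liftF st.Q Q' st.offs with hoffs0
  set Prem0 := liftF st.Q Q' (Pfin B st) with hPrem0
  have hUlift : Ufin B Q' offs0 = liftF st.Q Q' (Ufin B st.Q st.offs) :=
    Ufin_lift B st.Q Q' st.hQ hQ' hdvd st.offs st.hoffs
  have hUfin_lt : ∀ ω ∈ Ufin B st.Q st.offs, ω < st.Q := by
    intro ω hω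
    exact (mem_Ufin.1 hω).1
  have hUcard : ((Ufin B Q' offs0).card : ℝ) / Q'
      = ((Ufin B st.Q st.offs).card : ℝ) / st.Q := by
    rw [hUlift]
    exact lift_card_div st.Q Q' st.hQ hQ' hdvd _ hUfin_lt
  have hPcard : ((Prem0).card : ℝ) / Q' = ((Pfin B st).card : ℝ) / st.Q :=
    lift_card_div st.Q Q' st.hQ hQ' hdvd _ (Pfin_lt B st)
  have hPremProp : ∀ ψ ∈ Prem0, ψ < Q' ∧ ψ ∉ Ufin B Q' offs0 ∧
      ∃ b ∈ B, ψ % st.Q = (st.x + b) % st.Q := by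
    intro ψ hψ
    obtain ⟨hψQ', hψP⟩ := mem_liftF.1 hψ
    obtain ⟨hψblob, hψU⟩ := Finset.mem_sdiff.1 hψP
    refine ⟨hψQ', ?_, ?_⟩
    · rw [hUlift, mem_liftF]
      rintro ⟨_, h⟩
      exact hψU h
    · obtain ⟨b, hb, hbe⟩ := (mem_blob st.hQ).1 hψblob
      refine ⟨b, hb, ?_⟩
      rw [hbe]
  have hoffs0_lt : ∀ r ∈ offs0, r < Q' := fun r hr => (mem_liftF.1 hr).1
  have hM1 : ((Ufin B Q' offs0).card : ℝ) / Q' ≤ α := by rw [hUcard]; exact hInv.1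
  have hM2 : α ≤ ((Ufin B Q' offs0).card : ℝ) / Q' + (Prem0.card : ℝ) / Q' := by
    rw [hUcard, hPcard]; exact hInv.2
  obtain ⟨offs', x', hsub', hlt', hnew', hx'Q, hx'p, hm1', hm2'⟩ :=
    eat_loop B α Q' st.Q st.x hQ' st.hQ hdvd st.hx Prem0.card offs0 Prem0 le_rfl
      hoffs0_lt hPremProp hM1 hM2
  refine ⟨⟨Q', offs', x', hQ', hlt', hx'Q⟩, ⟨hm1', hm2'⟩, hdvd, hQlt, hη, ?_, ?_, hx'p⟩
  · intro r hr
    by_cases hr0 : r ∈ offs0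
    · exact Or.inl (mem_liftF.1 hr0).2
    · exact Or.inr (hnew' r hr hr0)
  · intro s hs hsQ
    exact hsub' (mem_liftF.2 ⟨hs, hsQ⟩)
lemma uniform_tails (X : Set ℕ) (N : ℕ) (R : Finset ℕ)
    (h : ∀ r ∈ R, ∃ M, ∀ y, y % N = r → M ≤ y → y ∈ X) :
    ∃ M, ∀ r ∈ R, ∀ y, y % N = r → M ≤ y → y ∈ X := by
  classical
  choose F hF using h
  refine ⟨R.attach.sup (fun r => F r.1 r.2), ?_⟩
  intro r hr y hy hM
  exact hF r hr y hy (le_trans (Finset.le_sup (f := fun (r : {x // x ∈ R}) => F r.1 r.2)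
    (Finset.mem_attach R ⟨r, hr⟩)) hM)

lemma initial_state (B : Set ℕ) (hB : B.Nonempty) (α : ℝ) (hα : α ∈ Set.Icc (0:ℝ) 1) :
    ∃ st : StState, st.Q = 1 ∧ Inv B α st := by
  classical
  obtain ⟨b₀, hb₀⟩ := hB
  refine ⟨⟨1, ∅, 0, one_pos, by simp, one_pos⟩, rfl, ?_, ?_⟩
  · have hU : Ufin B 1 (∅ : Finset ℕ) = ∅ := by
      ext ω
      simp [mem_Ufin]
    rw [hU]
    simpa using hα.1
  · have hP : (0 : ℕ) ∈ Pfin B ⟨1, ∅, 0, one_pos, by simp, one_pos⟩ := by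
      rw [Pfin, Finset.mem_sdiff]
      constructor
      · exact (mem_blob one_pos).2 ⟨b₀, hb₀, by omega⟩
      · intro h
        obtain ⟨_, r, hr, _⟩ := mem_Ufin.1 h
        exact absurd hr (Finset.notMem_empty r)
    have hcard : 1 ≤ (Pfin B ⟨1, ∅, 0, one_pos, by simp, one_pos⟩).card :=
      Finset.card_pos.2 ⟨0, hP⟩
    have hcardR : (1:ℝ) ≤ ((Pfin B ⟨1, ∅, 0, one_pos, by simp, one_pos⟩).card : ℝ) := by
      exact_mod_cast hcard
    have : (0:ℝ) ≤ ((Ufin B 1 (∅ : Finset ℕ)).card : ℝ) := by positivity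
    simp only [Nat.cast_one, div_one]
    linarith [hα.2]

lemma mem_sumset {A B : Set ℕ} {n : ℕ} :
    n ∈ sumset A B ↔ ∃ a ∈ A, ∃ b ∈ B, n = a + b := Iff.rfl

theorem stmt15' (B : Set ℕ) (hB : B.Nonempty) (hB0 : buckUpper B = 0)
    (α : ℝ) (hα : α ∈ Set.Icc (0 : ℝ) 1) :
    ∃ A : Set ℕ, buckUpper A = buckLower A ∧
      buckUpper (sumset A B) = buckLower (sumset A B) ∧
      buckUpper (sumset A B) = α := by
  classical
  obtain ⟨st₀, hQ₀, hInv₀⟩ := initial_state B hB α hα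
  have hstep : ∀ (p : {st : StState // Inv B α st}) (n : ℕ),
      ∃ st' : StState, Inv B α st' ∧ p.1.Q ∣ st'.Q ∧ p.1.Q < st'.Q ∧
        ((Rres B st'.Q).card : ℝ) / st'.Q ≤ 1 / (n + 1) ∧
        (∀ r ∈ st'.offs, r % p.1.Q ∈ p.1.offs ∨ r % p.1.Q = p.1.x) ∧
        (∀ s, s < st'.Q → s % p.1.Q ∈ p.1.offs → s ∈ st'.offs) ∧
        st'.x % p.1.Q = p.1.x :=
    fun p n => step_exists B hB0 α p.1 p.2 (1 / (n + 1)) (by positivity)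
  choose g hg1 hg2 hg3 hg4 hg5 hg6 hg7 using hstep
  set f : ℕ → {st : StState // Inv B α st} :=
    fun n => Nat.rec ⟨st₀, hInv₀⟩ (fun n p => ⟨g p n, hg1 p n⟩) n with hf
  have hfs : ∀ n : ℕ, (f (n + 1)).1 = g (f n) n := fun n => rfl
  set Qi : ℕ → ℕ := fun i => (f i).1.Q with hQi
  set Oi : ℕ → Finset ℕ := fun i => (f i).1.offs with hOi
  set xi : ℕ → ℕ := fun i => (f i).1.x with hxi
  have hQpos : ∀ i, 0 < Qi i := fun i => (f i).1.hQ
  have hQposR : ∀ i, (0:ℝ) < Qi i := fun i => by exact_mod_cast hQpos i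
  have hOlt : ∀ i, ∀ r ∈ Oi i, r < Qi i := fun i => (f i).1.hoffs
  have hxlt : ∀ i, xi i < Qi i := fun i => (f i).1.hx
  have s1 : ∀ n, Qi n ∣ Qi (n + 1) := fun n => hg2 (f n) n
  have s2 : ∀ n, Qi n < Qi (n + 1) := fun n => hg3 (f n) n
  have s3 : ∀ n, ((Rres B (Qi (n + 1))).card : ℝ) / (Qi (n + 1)) ≤ 1 / (n + 1) :=
    fun n => hg4 (f n) n
  have s4 : ∀ n, ∀ r ∈ Oi (n + 1), r % Qi n ∈ Oi n ∨ r % Qi n = xi n :=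
    fun n => hg5 (f n) n
  have s5 : ∀ n, ∀ s, s < Qi (n + 1) → s % Qi n ∈ Oi n → s ∈ Oi (n + 1) :=
    fun n => hg6 (f n) n
  have s6 : ∀ n, xi (n + 1) % Qi n = xi n := fun n => hg7 (f n) n
  -- global chain facts
  have G1 : ∀ i j, i ≤ j → Qi i ∣ Qi j := by
    intro i j hij
    induction j, hij using Nat.le_induction with
    | base => exact dvd_refl _
    | succ j hij ih => exact dvd_trans ih (s1 j)
  have G2 : ∀ i j, i ≤ j → xi j % Qi i = xi i := by
    intro i j hij
    induction j, hij using Nat.le_induction with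
    | base => exact Nat.mod_eq_of_lt (hxlt i)
    | succ j hij ih =>
      rw [← Nat.mod_mod_of_dvd _ (G1 i j hij), s6 j, ih]
  have G3 : ∀ i j, i ≤ j → ∀ r ∈ Oi j, r % Qi i ∈ Oi i ∨ r % Qi i = xi i := by
    intro i j hij
    induction j, hij using Nat.le_induction with
    | base => intro r hr; exact Or.inl (by rw [Nat.mod_eq_of_lt (hOlt i r hr)]; exact hr)
    | succ j hij ih =>
      intro r hr
      rcases s4 j r hr with h | h
      · have := ih _ h
        rwa [Nat.mod_mod_of_dvd _ (G1 i j hij)] at this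
      · right
        rw [← Nat.mod_mod_of_dvd _ (G1 i j hij), h, G2 i j hij]
  have G4 : ∀ i j, i ≤ j → ∀ y : ℕ, y % Qi i ∈ Oi i → y % Qi j ∈ Oi j := by
    intro i j hij
    induction j, hij using Nat.le_induction with
    | base => intro y hy; exact hy
    | succ j hij ih =>
      intro y hy
      apply s5 j _ (Nat.mod_lt _ (hQpos (j + 1)))
      rw [Nat.mod_mod_of_dvd _ (s1 j)]
      exact ih y hy
  have G5 : ∀ i, i + 1 ≤ Qi i := by
    intro i
    induction i with
    | zero => rw [hQi]; simp only; rw [show (f 0).1 = st₀ from rfl, hQ₀]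
    | succ n ih => have := s2 n; omega
  -- the set A
  set D : ℕ → Set ℕ := fun i => {y : ℕ | y % Qi i ∈ Oi i} with hD
  set A : Set ℕ := ⋃ i, D i with hA
  have hDA : ∀ i, D i ⊆ A := fun i => Set.subset_iUnion D i
  have hAmem : ∀ i, ∀ y ∈ A, y % Qi i ∈ Oi i ∨ y % Qi i = xi i := by
    intro i y hy
    obtain ⟨j, hj⟩ := Set.mem_iUnion.1 hy
    rcases le_total i j with hij | hij
    · have hk : y % Qi j ∈ Oi j := hj
      rcases G3 i j hij _ hk with h | h
      · rw [Nat.mod_mod_of_dvd _ (G1 i j hij)] at h; exact Or.inl h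
      · rw [Nat.mod_mod_of_dvd _ (G1 i j hij)] at h; exact Or.inr h
    · exact Or.inl (G4 j i hij y hj)
  -- numerics at each stage
  have hInv : ∀ i, Inv B α (f i).1 := fun i => (f i).2
  have hUle : ∀ i, ((Ufin B (Qi i) (Oi i)).card : ℝ) / Qi i ≤ α := fun i => (hInv i).1
  have hUge : ∀ i, α ≤ ((Ufin B (Qi i) (Oi i)).card : ℝ) / Qi i
      + ((Pfin B (f i).1).card : ℝ) / Qi i := fun i => (hInv i).2
  have hPsmall : ∀ n : ℕ, ((Pfin B (f (n + 1)).1).card : ℝ) / Qi (n + 1) ≤ 1 / (n + 1) := by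
    intro n
    refine le_trans ?_ (s3 n)
    have h1 : (Pfin B (f (n + 1)).1).card ≤ (Rres B (Qi (n + 1))).card := by
      refine le_trans (Finset.card_le_card Finset.sdiff_subset) (blob_card_le _ _ _)
    have h2 : ((Pfin B (f (n + 1)).1).card : ℝ) ≤ ((Rres B (Qi (n + 1))).card : ℝ) := by
      exact_mod_cast h1
    have h3 := hQposR (n + 1)
    gcongr
  -- conclusion for A
  have hAeq : buckUpper A = buckLower A := by
    apply buck_eq_self
    intro ε hε
    obtain ⟨n, hn⟩ := exists_nat_gt (1 / ε)
    set i := n + 1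
    refine ⟨Qi i, Oi i, insert (xi i) (Oi i), 0, hQpos i, hOlt i, ?_, ?_, ?_, ?_⟩
    · intro r hr
      rcases Finset.mem_insert.1 hr with rfl | hr
      · exact hxlt i
      · exact hOlt i r hr
    · intro r hr y hy _
      exact hDA i (by rw [hD]; simp only [Set.mem_setOf_eq, hy]; exact hr)
    · intro y hy
      rcases hAmem i y hy with h | h
      · exact Finset.mem_insert_of_mem h
      · rw [h]; exact Finset.mem_insert_self _ _
    · have hc : ((insert (xi i) (Oi i)).card : ℝ) ≤ (Oi i).card + 1 := by
        exact_mod_cast Finset.card_insert_le _ _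
      have hQε : (1:ℝ) / Qi i ≤ ε := by
        have h1 : (1:ℝ) / ε < n + 1 := by
          have : ((n:ℝ)) < n + 1 := by linarith
          linarith
        have h2 : (n + 1 : ℝ) ≤ Qi i := by
          have := G5 i
          have : ((i:ℝ)) + 1 ≤ Qi i := by exact_mod_cast this
          push_cast at this ⊢
          linarith [show ((i:ℝ)) = n + 1 by simp [i]]
        rw [div_le_iff₀ (hQposR i)]
        rw [div_lt_iff₀ hε] at h1
        nlinarith
      calc ((insert (xi i) (Oi i)).card : ℝ) / Qi i
          ≤ (((Oi i).card : ℝ) + 1) / Qi i := by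
            gcongr
        _ = ((Oi i).card : ℝ) / Qi i + 1 / Qi i := add_div _ _ _
        _ ≤ ((Oi i).card : ℝ) / Qi i + ε := by linarith [hQε]
  -- facts for the sumset
  have hScover : ∀ i, ∀ y ∈ sumset A B,
      y % Qi i ∈ Ufin B (Qi i) (Oi i) ∪ Pfin B (f i).1 := by
    intro i y hy
    obtain ⟨a, ha, b, hb, rfl⟩ := mem_sumset.1 hy
    rcases hAmem i a ha with h | h
    · apply Finset.mem_union_left
      refine mem_Ufin.2 ⟨Nat.mod_lt _ (hQpos i), a % Qi i, h, b, hb, ?_⟩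
      rw [Nat.mod_add_mod]
    · have hblob : (a + b) % Qi i ∈ blob B (Qi i) (xi i) := by
        refine (mem_blob (hQpos i)).2 ⟨b, hb, ?_⟩
        rw [← h, Nat.mod_add_mod]
      by_cases hU : (a + b) % Qi i ∈ Ufin B (Qi i) (Oi i)
      · exact Finset.mem_union_left _ hU
      · apply Finset.mem_union_right
        rw [Pfin, Finset.mem_sdiff]
        exact ⟨hblob, hU⟩
  have hStails : ∀ i, ∀ ω ∈ Ufin B (Qi i) (Oi i), ∃ M, ∀ y, y % Qi i = ω → M ≤ y →
      y ∈ sumset A B := by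
    intro i ω hω
    obtain ⟨hωQ, r, hr, b, hb, hrb⟩ := mem_Ufin.1 hω
    refine ⟨r + b, ?_⟩
    intro y hy hM
    have h1 : y % Qi i = (r + b) % Qi i := by rw [hy, hrb]
    have h2 : Qi i ∣ y - (r + b) := (Nat.modEq_iff_dvd' hM).1 (Nat.ModEq.symm h1)
    obtain ⟨t, ht⟩ := h2
    have hyeq : y = (r + Qi i * t) + b := by omega
    refine mem_sumset.2 ⟨r + Qi i * t, ?_, b, hb, hyeq⟩
    apply hDA i
    rw [hD]
    simp only [Set.mem_setOf_eq]
    rw [Nat.add_mul_mod_self_left, Nat.mod_eq_of_lt (hOlt i r hr)]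
    exact hr
  -- data for sumset bounds at stage n+1 for given ε
  have hSdata : ∀ ε : ℝ, 0 < ε → ∃ (N : ℕ) (Rin Rout : Finset ℕ) (M : ℕ),
      0 < N ∧ (∀ r ∈ Rin, r < N) ∧ (∀ r ∈ Rout, r < N) ∧
      (∀ r ∈ Rin, ∀ y, y % N = r → M ≤ y → y ∈ sumset A B) ∧
      (∀ y ∈ sumset A B, y % N ∈ Rout) ∧
      α - ε ≤ (Rin.card : ℝ) / N ∧ (Rout.card : ℝ) / N ≤ α + ε ∧
      (Rout.card : ℝ) / N ≤ (Rin.card : ℝ) / N + ε := by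
    intro ε hε
    obtain ⟨n, hn⟩ := exists_nat_gt (1 / ε)
    set i := n + 1 with hi
    have hεi : (1:ℝ) / (n + 1) ≤ ε := by
      rw [div_le_iff₀ (by positivity)]
      rw [div_lt_iff₀ hε] at hn
      nlinarith
    have hp : ((Pfin B (f i).1).card : ℝ) / Qi i ≤ ε := le_trans (hPsmall n) hεi
    obtain ⟨M, hM⟩ := uniform_tails (sumset A B) (Qi i) (Ufin B (Qi i) (Oi i)) (hStails i)
    refine ⟨Qi i, Ufin B (Qi i) (Oi i), Ufin B (Qi i) (Oi i) ∪ Pfin B (f i).1, M,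
      hQpos i, ?_, ?_, hM, hScover i, ?_, ?_, ?_⟩
    · intro r hr; exact (mem_Ufin.1 hr).1
    · intro r hr
      rcases Finset.mem_union.1 hr with h | h
      · exact (mem_Ufin.1 h).1
      · exact Pfin_lt B (f i).1 r h
    · have := hUge i
      linarith
    · have hdisj : Disjoint (Ufin B (Qi i) (Oi i)) (Pfin B (f i).1) :=
        Finset.disjoint_sdiff
      have hcard : ((Ufin B (Qi i) (Oi i) ∪ Pfin B (f i).1).card : ℝ)
          = ((Ufin B (Qi i) (Oi i)).card : ℝ) + (Pfin B (f i).1).card := by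
        exact_mod_cast Finset.card_union_of_disjoint hdisj
      rw [hcard, add_div]
      linarith [hUle i]
    · have hdisj : Disjoint (Ufin B (Qi i) (Oi i)) (Pfin B (f i).1) :=
        Finset.disjoint_sdiff
      have hcard : ((Ufin B (Qi i) (Oi i) ∪ Pfin B (f i).1).card : ℝ)
          = ((Ufin B (Qi i) (Oi i)).card : ℝ) + (Pfin B (f i).1).card := by
        exact_mod_cast Finset.card_union_of_disjoint hdisj
      rw [hcard, add_div]
      linarith
  have hSval : buckUpper (sumset A B) = α ∧ buckLower (sumset A B) = α := by
    apply buck_eq_val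
    intro ε hε
    obtain ⟨N, Rin, Rout, M, h1, h2, h3, h4, h5, h6, h7, _⟩ := hSdata ε hε
    exact ⟨N, Rin, Rout, M, h1, h2, h3, h4, h5, h6, h7⟩
  have hSeq : buckUpper (sumset A B) = buckLower (sumset A B) := by
    apply buck_eq_self
    intro ε hε
    obtain ⟨N, Rin, Rout, M, h1, h2, h3, h4, h5, _, _, h8⟩ := hSdata ε hε
    exact ⟨N, Rin, Rout, M, h1, h2, h3, h4, h5, h8⟩
  exact ⟨A, hAeq, hSeq, hSval.1⟩

end BuckProof

theorem stmt15 (B : Set ℕ) (hB : B.Nonempty) (hB0 : buckUpper B = 0)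
    (α : ℝ) (hα : α ∈ Set.Icc (0 : ℝ) 1) :
    ∃ A : Set ℕ, buckUpper A = buckLower A ∧
      buckUpper (sumset A B) = buckLower (sumset A B) ∧
      buckUpper (sumset A B) = α := BuckProof.stmt15' B hB hB0 α hα
end
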